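/- arXiv:2306.02212 — 15 statements merged into one kernel-verified Lean document; each statement's English description precedes it below -/
import Mathlib

section
/- Let E be a real inner product space, f : E → ℝ a convex differentiable function, and x* a minimizer of f. Fix σ ∈ [0,1), η > 0, A ≥ 0, and points x, z ∈ E. Set a = (η + √(η² + 4ηA))/2 and y = (A/(A+a))·x + (a/(A+a))·z. Suppose x̂ ∈ E satisfies ‖x̂ − y + η·∇f(x̂)‖ ≤ σ‖x̂ − y‖. Define x⁺ = x̂, z⁺ = z − a·∇f(x̂), and A⁺ = A + a. Then A⁺(f(x⁺) − f(x*)) + (1/2)‖z⁺ − x*‖² ≤ A(f(x) − f(x*)) + (1/2)‖z − x*‖² − ((1−σ²)a²/(2η²))‖x̂ − y‖². -/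
/-!
Convexity at `x̂` bounds `A (f x̂ - f x) + a (f x̂ - f x*)` by `⟪∇f x̂, A (x̂ - x) + a (x̂ - x*)⟫`, and
since `(A + a) y = A x + a z` this equals `(A + a) ⟪∇f x̂, x̂ - y⟫ + a ⟪∇f x̂, z - x*⟫`. The second term
cancels against the cross term of `½‖z - a ∇f x̂ - x*‖²`. What remains,
`(A + a) ⟪∇f x̂, x̂ - y⟫ + a² ‖∇f x̂‖² / 2`, equals `a² / (2η²) (‖x̂ - y + η ∇f x̂‖² - ‖x̂ - y‖²)` because
`a² = η (A + a)`, and the inexact proximal condition bounds it by `-(1 - σ²) a² / (2η²) ‖x̂ - y‖²`.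
-/

open scoped RealInnerProductSpace

theorem ConvexOn.apply_sub_le_of_hasFDerivAt {E : Type*} [NormedAddCommGroup E] [NormedSpace ℝ E]
    {s : Set E} {f : E → ℝ} {f' : E →L[ℝ] ℝ} {p w : E} (hf : ConvexOn ℝ s f)
    (hp : p ∈ s) (hw : w ∈ s) (hd : HasFDerivAt f f' p) : f' (w - p) ≤ f w - f p := by
  set ℓ : ℝ →ᵃ[ℝ] E := AffineMap.lineMap p w
  have hd0 : HasDerivAt (f ∘ ℓ) (f' (w - p)) 0 :=
    (AffineMap.lineMap_apply_zero (k := ℝ) p w ▸ hd).comp_hasDerivAt _ AffineMap.hasDerivAt_lineMap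
  simpa [ℓ, slope_def_field] using (hf.comp_affineMap ℓ).le_slope_of_hasDerivAt
    (by simpa [ℓ]) (by simpa [ℓ]) zero_lt_one hd0

theorem sq_eq_mul_add_of_eq_half_add_sqrt {η A a : ℝ} (h : 0 ≤ η ^ 2 + 4 * η * A)
    (ha : a = (η + √(η ^ 2 + 4 * η * A)) / 2) : a ^ 2 = η * (A + a) := by
  subst ha
  linear_combination (Real.sq_sqrt h) / 4

theorem two_mul_inner_add_sq_norm_le_of_norm_add_smul_le {E : Type*} [NormedAddCommGroup E]
    [InnerProductSpace ℝ E] {d g : E} {η σ : ℝ} (h : ‖d + η • g‖ ≤ σ * ‖d‖) :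
    2 * η * ⟪g, d⟫ + η ^ 2 * ‖g‖ ^ 2 ≤ (σ ^ 2 - 1) * ‖d‖ ^ 2 := by
  have hsq : ‖d + η • g‖ ^ 2 ≤ (σ * ‖d‖) ^ 2 := pow_le_pow_left₀ (norm_nonneg _) h 2
  rw [norm_add_sq_real, real_inner_smul_right, norm_smul, real_inner_comm, Real.norm_eq_abs] at hsq
  nlinarith [sq_abs η]

theorem stmt0_general
    {E : Type*} [NormedAddCommGroup E] [InnerProductSpace ℝ E]
    (f : E → ℝ) (gf : E → E)
    (hdiff : ∀ p : E, HasFDerivAt f (innerSL ℝ (gf p)) p)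
    (hconv : ConvexOn ℝ Set.univ f)
    (xstar : E)
    (σ η A : ℝ) (hη : 0 < η) (hA : 0 ≤ A)
    (x z : E)
    (a : ℝ) (ha : a = (η + Real.sqrt (η ^ 2 + 4 * η * A)) / 2)
    (y : E) (hy : y = (A / (A + a)) • x + (a / (A + a)) • z)
    (xhat : E)
    (hxhat : ‖xhat - y + η • gf xhat‖ ≤ σ * ‖xhat - y‖)
    (xplus zplus : E) (Aplus : ℝ)
    (hxplus : xplus = xhat) (hzplus : zplus = z - a • gf xhat)
    (hAplus : Aplus = A + a) :
    Aplus * (f xplus - f xstar) + (1 / 2) * ‖zplus - xstar‖ ^ 2 ≤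
      A * (f x - f xstar) + (1 / 2) * ‖z - xstar‖ ^ 2
        - ((1 - σ ^ 2) * a ^ 2 / (2 * η ^ 2)) * ‖xhat - y‖ ^ 2 := by
  subst xplus zplus Aplus
  set g := gf xhat
  have ha_pos : 0 < a := by rw [ha]; positivity
  have hroot : a ^ 2 = η * (A + a) := sq_eq_mul_add_of_eq_half_add_sqrt (by positivity) ha
  have hcvx (w : E) : ⟪g, w - xhat⟫ ≤ f w - f xhat :=
    hconv.apply_sub_le_of_hasFDerivAt (Set.mem_univ _) (Set.mem_univ _) (hdiff xhat)
  have hcoupling : (A + a) • (xhat - y) = A • (xhat - x) + a • (xhat - z) := by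
    rw [hy, smul_sub, smul_add, smul_smul, smul_smul, mul_div_cancel₀ _ (by positivity),
      mul_div_cancel₀ _ (by positivity)]
    module
  have hinner := congrArg (⟪g, ·⟫) hcoupling
  have hz : ‖z - a • g - xstar‖ ^ 2 =
      ‖z - xstar‖ ^ 2 - 2 * a * ⟪g, z - xstar⟫ + a ^ 2 * ‖g‖ ^ 2 := by
    rw [show z - a • g - xstar = (z - xstar) - a • g by abel, norm_sub_sq_real,
      real_inner_smul_right, norm_smul, real_inner_comm, mul_pow, Real.norm_eq_abs, sq_abs]
    ring
  have hstep : (A + a) * ⟪g, xhat - y⟫ + a ^ 2 / 2 * ‖g‖ ^ 2 ≤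
      -((1 - σ ^ 2) * a ^ 2 / (2 * η ^ 2)) * ‖xhat - y‖ ^ 2 := by
    have := mul_le_mul_of_nonneg_left (two_mul_inner_add_sq_norm_le_of_norm_add_smul_le hxhat)
      (by positivity : 0 ≤ a ^ 2 / (2 * η ^ 2))
    rw [hroot] at this ⊢
    field_simp at this ⊢
    linarith
  have hx := mul_le_mul_of_nonneg_left (hcvx x) hA
  have hxstar := mul_le_mul_of_nonneg_left (hcvx xstar) ha_pos.le
  simp only [inner_smul_right, inner_add_right, inner_sub_right] at hinner hx hxstar hz hstep
  linarith

/-- One-step potential decrease of the Monteiro–Svaiter acceleration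
framework in the case where the initial trial step size is accepted. -/
theorem stmt0
    {E : Type*} [NormedAddCommGroup E] [InnerProductSpace ℝ E]
    (f : E → ℝ) (gf : E → E)
    (hdiff : ∀ p : E, HasFDerivAt f (innerSL ℝ (gf p)) p)
    (hconv : ConvexOn ℝ Set.univ f)
    (xstar : E) (hmin : ∀ w : E, f xstar ≤ f w)
    (σ η A : ℝ) (hσ0 : 0 ≤ σ) (hσ1 : σ < 1) (hη : 0 < η) (hA : 0 ≤ A)
    (x z : E)
    (a : ℝ) (ha : a = (η + Real.sqrt (η ^ 2 + 4 * η * A)) / 2)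
    (y : E) (hy : y = (A / (A + a)) • x + (a / (A + a)) • z)
    (xhat : E)
    (hxhat : ‖xhat - y + η • gf xhat‖ ≤ σ * ‖xhat - y‖)
    (xplus zplus : E) (Aplus : ℝ)
    (hxplus : xplus = xhat) (hzplus : zplus = z - a • gf xhat)
    (hAplus : Aplus = A + a) :
    Aplus * (f xplus - f xstar) + (1 / 2) * ‖zplus - xstar‖ ^ 2 ≤
      A * (f x - f xstar) + (1 / 2) * ‖z - xstar‖ ^ 2
        - ((1 - σ ^ 2) * a ^ 2 / (2 * η ^ 2)) * ‖xhat - y‖ ^ 2 :=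
  stmt0_general f gf hdiff hconv xstar σ η A hη hA x z a ha y hy xhat hxhat xplus zplus Aplus hxplus
    hzplus hAplus
end

section
/- Let E be a real inner product space, f : E → ℝ a convex differentiable function, and x* a minimizer of f. Fix σ ∈ [0,1), γ ∈ (0,1), η > 0, A ≥ 0, and points x, z ∈ E. Set a = (η + √(η² + 4ηA))/2 and y = (A/(A+a))·x + (a/(A+a))·z. Suppose x̂ ∈ E satisfies ‖x̂ − y + γη·∇f(x̂)‖ ≤ σ‖x̂ − y‖. Define x⁺ = ((1−γ)A/(A+γa))·x + (γ(A+a)/(A+γa))·x̂, z⁺ = z − γa·∇f(x̂), and A⁺ = A + γa. Then A⁺(f(x⁺) − f(x*)) + (1/2)‖z⁺ − x*‖² ≤ A(f(x) − f(x*)) + (1/2)‖z − x*‖² − ((1−σ²)a²/(2η²))‖x̂ − y‖². -/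
open scoped RealInnerProductSpace

open Set

/-! The first-order condition `f(x̂) + ⟪∇f(x̂), u - x̂⟫ ≤ f(u)` at `u = x` and `u = x*`, together
with convexity of `f` along the segment `[x, x̂]`, bounds the new potential by the old one plus
`γ(A + a)⟪∇f(x̂), x̂ - y⟫ + (γa)²‖∇f(x̂)‖²/2`, since `(A + a) y = A x + a z`. The choice of `a`
makes `a² = η(A + a)`, so this excess is `a²/(2η²)` times `2γη⟪∇f(x̂), x̂ - y⟫ + ‖γη ∇f(x̂)‖²`,
which the inexactness condition bounds by `(σ² - 1)‖x̂ - y‖²` after squaring. -/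

theorem ConvexOn.add_fderiv_sub_le {E : Type*} [NormedAddCommGroup E] [NormedSpace ℝ E]
    {s : Set E} {f : E → ℝ} {f' : E →L[ℝ] ℝ} {p u : E} (hf : ConvexOn ℝ s f) (hp : p ∈ s)
    (hu : u ∈ s) (hfp : HasFDerivAt f f' p) :
    f p + f' (u - p) ≤ f u := by
  have hline : HasDerivAt (f ∘ AffineMap.lineMap (k := ℝ) p u) (f' (u - p)) 0 :=
    hfp.comp_hasDerivAt_of_eq 0 AffineMap.hasDerivAt_lineMap
      (AffineMap.lineMap_apply_zero p u).symm
  have hslope := (hf.comp_affineMap (AffineMap.lineMap (k := ℝ) p u)).le_slope_of_hasDerivAt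
    (by simpa using hp) (by simpa using hu) zero_lt_one hline
  simp only [slope_def_field, Function.comp_apply, AffineMap.lineMap_apply_zero,
    AffineMap.lineMap_apply_one, sub_zero, div_one] at hslope
  linarith

theorem ConvexOn.mul_map_div_smul_add_div_smul_le {E : Type*} [AddCommGroup E] [Module ℝ E]
    {f : E → ℝ} (hf : ConvexOn ℝ univ f) {μ ν : ℝ} (hμ : 0 ≤ μ) (hν : 0 ≤ ν) (hμν : 0 < μ + ν)
    (x y : E) :
    (μ + ν) * f ((μ / (μ + ν)) • x + (ν / (μ + ν)) • y) ≤ μ * f x + ν * f y := by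
  have h := hf.2 (mem_univ x) (mem_univ y) (div_nonneg hμ hμν.le) (div_nonneg hν hμν.le)
    (by field_simp)
  calc (μ + ν) * f ((μ / (μ + ν)) • x + (ν / (μ + ν)) • y)
      ≤ (μ + ν) * ((μ / (μ + ν)) * f x + (ν / (μ + ν)) * f y) := by
        gcongr; simpa only [smul_eq_mul] using h
    _ = μ * f x + ν * f y := by field_simp

theorem two_mul_inner_add_sq_mul_norm_sq_le {E : Type*} [NormedAddCommGroup E]
    [InnerProductSpace ℝ E] {u g : E} {t σ : ℝ} (h : ‖u + t • g‖ ≤ σ * ‖u‖) :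
    2 * t * ⟪g, u⟫ + t ^ 2 * ‖g‖ ^ 2 ≤ (σ ^ 2 - 1) * ‖u‖ ^ 2 := by
  have hsq := pow_le_pow_left₀ (norm_nonneg _) h 2
  rw [norm_add_sq_real, real_inner_smul_right, real_inner_comm, norm_smul, Real.norm_eq_abs,
    mul_pow, mul_pow, sq_abs] at hsq
  linarith

theorem sq_eq_mul_add_of_eq_quadratic_root {η A a : ℝ} (hηA : 0 ≤ η ^ 2 + 4 * η * A)
    (ha : a = (η + Real.sqrt (η ^ 2 + 4 * η * A)) / 2) :
    a ^ 2 = η * (A + a) := by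
  subst ha
  linear_combination Real.sq_sqrt hηA / 4

theorem ConvexOn.potential_damped_step_le {E : Type*} [NormedAddCommGroup E]
    [InnerProductSpace ℝ E] {f : E → ℝ} (hf : ConvexOn ℝ univ f) {g xhat : E}
    (hg : HasFDerivAt f (innerSL ℝ g) xhat) (xstar x z y : E) {γ A a : ℝ} (hγ0 : 0 < γ)
    (hγ1 : γ ≤ 1) (hA : 0 ≤ A) (ha : 0 < a) (hy : (A + a) • y = A • x + a • z) :
    (A + γ * a) * (f (((1 - γ) * A / (A + γ * a)) • x + (γ * (A + a) / (A + γ * a)) • xhat)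
        - f xstar) + (1 / 2) * ‖z - (γ * a) • g - xstar‖ ^ 2 ≤
      A * (f x - f xstar) + (1 / 2) * ‖z - xstar‖ ^ 2
        + γ * (A + a) * ⟪g, xhat - y⟫ + (γ * a) ^ 2 / 2 * ‖g‖ ^ 2 := by
  have hweights : A + γ * a = (1 - γ) * A + γ * (A + a) := by ring
  have hconv := hf.mul_map_div_smul_add_div_smul_le (mul_nonneg (sub_nonneg.2 hγ1) hA)
    (by positivity : 0 ≤ γ * (A + a)) (by positivity) x xhat
  rw [← hweights] at hconv
  have hx := hf.add_fderiv_sub_le (mem_univ _) (mem_univ x) hg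
  have hxstar := hf.add_fderiv_sub_le (mem_univ _) (mem_univ xstar) hg
  simp only [innerSL_apply_apply] at hx hxstar
  have hz : ‖z - (γ * a) • g - xstar‖ ^ 2
      = ‖z - xstar‖ ^ 2 - 2 * (γ * a) * ⟪g, z - xstar⟫ + (γ * a) ^ 2 * ‖g‖ ^ 2 := by
    rw [sub_right_comm, norm_sub_sq_real, real_inner_smul_right, real_inner_comm, norm_smul,
      Real.norm_eq_abs, mul_pow, sq_abs]
    ring
  have hsplit : A * ⟪g, x - xhat⟫ + a * ⟪g, xstar - xhat⟫ + a * ⟪g, z - xstar⟫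
      = -((A + a) * ⟪g, xhat - y⟫) := by
    have hvec : A • (x - xhat) + a • (xstar - xhat) + a • (z - xstar)
        = -((A + a) • (xhat - y)) := by
      rw [smul_sub (A + a), hy]; module
    simpa only [inner_add_right, inner_neg_right, real_inner_smul_right] using
      congrArg (⟪g, ·⟫) hvec
  linear_combination hconv + mul_le_mul_of_nonneg_left hx (by positivity : 0 ≤ γ * A)
    + mul_le_mul_of_nonneg_left hxstar (by positivity : 0 ≤ γ * a) + (1 / 2) * hz - γ * hsplit

theorem stmt1_general
    {E : Type*} [NormedAddCommGroup E] [InnerProductSpace ℝ E]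
    (f : E → ℝ) (gf : E → E)
    (hdiff : ∀ p : E, HasFDerivAt f (innerSL ℝ (gf p)) p)
    (hconv : ConvexOn ℝ Set.univ f)
    (xstar : E)
    (σ γ η A : ℝ) (hγ0 : 0 < γ) (hγ1 : γ < 1)
    (hη : 0 < η) (hA : 0 ≤ A)
    (x z : E)
    (a : ℝ) (ha : a = (η + Real.sqrt (η ^ 2 + 4 * η * A)) / 2)
    (y : E) (hy : y = (A / (A + a)) • x + (a / (A + a)) • z)
    (xhat : E)
    (hxhat : ‖xhat - y + (γ * η) • gf xhat‖ ≤ σ * ‖xhat - y‖)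
    (xplus zplus : E) (Aplus : ℝ)
    (hxplus : xplus = ((1 - γ) * A / (A + γ * a)) • x + (γ * (A + a) / (A + γ * a)) • xhat)
    (hzplus : zplus = z - (γ * a) • gf xhat)
    (hAplus : Aplus = A + γ * a) :
    Aplus * (f xplus - f xstar) + (1 / 2) * ‖zplus - xstar‖ ^ 2 ≤
      A * (f x - f xstar) + (1 / 2) * ‖z - xstar‖ ^ 2
        - ((1 - σ ^ 2) * a ^ 2 / (2 * η ^ 2)) * ‖xhat - y‖ ^ 2 := by
  have ha_pos : 0 < a := by rw [ha]; positivity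
  have hAa : A + a ≠ 0 := by positivity
  have ha_sq : a ^ 2 = η * (A + a) := sq_eq_mul_add_of_eq_quadratic_root (by positivity) ha
  have hy' : (A + a) • y = A • x + a • z := by
    rw [hy, smul_add, smul_smul, smul_smul, mul_div_cancel₀ _ hAa, mul_div_cancel₀ _ hAa]
  have hstep := hconv.potential_damped_step_le (hdiff xhat) xstar x z y hγ0 hγ1.le hA
    ha_pos hy'
  have hinexact := two_mul_inner_add_sq_mul_norm_sq_le hxhat
  have hexcess : γ * (A + a) * ⟪gf xhat, xhat - y⟫ + (γ * a) ^ 2 / 2 * ‖gf xhat‖ ^ 2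
      = a ^ 2 / (2 * η ^ 2)
        * (2 * (γ * η) * ⟪gf xhat, xhat - y⟫ + (γ * η) ^ 2 * ‖gf xhat‖ ^ 2) := by
    field_simp
    linear_combination (-2 * ⟪gf xhat, xhat - y⟫) * ha_sq
  have hbound := mul_le_mul_of_nonneg_left hinexact (by positivity : 0 ≤ a ^ 2 / (2 * η ^ 2))
  subst hxplus hzplus hAplus
  linear_combination hstep + hbound + hexcess

/-- One-step potential decrease of the Monteiro–Svaiter acceleration
framework in the backtracking case, with momentum damping factor `γ = η̂/η < 1`. -/
theorem stmt1
    {E : Type*} [NormedAddCommGroup E] [InnerProductSpace ℝ E]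
    (f : E → ℝ) (gf : E → E)
    (hdiff : ∀ p : E, HasFDerivAt f (innerSL ℝ (gf p)) p)
    (hconv : ConvexOn ℝ Set.univ f)
    (xstar : E) (hmin : ∀ w : E, f xstar ≤ f w)
    (σ γ η A : ℝ) (hσ0 : 0 ≤ σ) (hσ1 : σ < 1) (hγ0 : 0 < γ) (hγ1 : γ < 1)
    (hη : 0 < η) (hA : 0 ≤ A)
    (x z : E)
    (a : ℝ) (ha : a = (η + Real.sqrt (η ^ 2 + 4 * η * A)) / 2)
    (y : E) (hy : y = (A / (A + a)) • x + (a / (A + a)) • z)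
    (xhat : E)
    (hxhat : ‖xhat - y + (γ * η) • gf xhat‖ ≤ σ * ‖xhat - y‖)
    (xplus zplus : E) (Aplus : ℝ)
    (hxplus : xplus = ((1 - γ) * A / (A + γ * a)) • x + (γ * (A + a) / (A + γ * a)) • xhat)
    (hzplus : zplus = z - (γ * a) • gf xhat)
    (hAplus : Aplus = A + γ * a) :
    Aplus * (f xplus - f xstar) + (1 / 2) * ‖zplus - xstar‖ ^ 2 ≤
      A * (f x - f xstar) + (1 / 2) * ‖z - xstar‖ ^ 2
        - ((1 - σ ^ 2) * a ^ 2 / (2 * η ^ 2)) * ‖xhat - y‖ ^ 2 :=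
  stmt1_general f gf hdiff hconv xstar σ γ η A hγ0 hγ1 hη hA x z a ha y hy xhat hxhat xplus zplus
    Aplus hxplus hzplus hAplus
end

section
/- Let (η_k)_{k≥0} and (η̂_k)_{k≥0} be sequences of positive reals and B ⊆ ℕ a set of indices such that η̂_k = η_k for k ∉ B and 0 < η̂_k ≤ η_k for k ∈ B. Define A_0 = 0, a_k = (η_k + √(η_k² + 4 η_k A_k))/2, and A_{k+1} = A_k + a_k if k ∉ B, A_{k+1} = A_k + (η̂_k/η_k)·a_k if k ∈ B. Then for every N ≥ 1, A_N ≥ (1/4)·(√η̂_0 + Σ_{1 ≤ k ≤ N−1, k ∉ B} √η̂_k)². -/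
/-- Lower bound on the Monteiro–Svaiter weights `A_N` in terms of the
accepted step sizes of the non-backtracking iterations. -/
theorem stmt2
    (η ηh : ℕ → ℝ) (hηpos : ∀ k, 0 < η k) (hηhpos : ∀ k, 0 < ηh k)
    (B : Set ℕ) [DecidablePred (· ∈ B)]
    (heq : ∀ k ∉ B, ηh k = η k) (hle : ∀ k ∈ B, ηh k ≤ η k)
    (A a : ℕ → ℝ)
    (hA0 : A 0 = 0)
    (ha : ∀ k, a k = (η k + Real.sqrt ((η k) ^ 2 + 4 * η k * A k)) / 2)
    (hAn : ∀ k ∉ B, A (k + 1) = A k + a k)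
    (hAb : ∀ k ∈ B, A (k + 1) = A k + (ηh k / η k) * a k)
    (N : ℕ) (hN : 1 ≤ N) :
    (1 / 4) * (Real.sqrt (ηh 0)
        + ∑ k ∈ (Finset.Ico 1 N).filter (fun k => k ∉ B), Real.sqrt (ηh k)) ^ 2
      ≤ A N := by
  -- nonnegativity and positivity of a
  have hapos : ∀ k, 0 ≤ A k → 0 < a k := by
    intro k hk
    rw [ha k]
    have h1 := Real.sqrt_nonneg ((η k) ^ 2 + 4 * η k * A k)
    have h2 := hηpos k
    linarith
  have hAnn : ∀ k, 0 ≤ A k := by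
    intro k
    induction k with
    | zero => rw [hA0]
    | succ n ih =>
      have hpa := hapos n ih
      by_cases hb : n ∈ B
      · rw [hAb n hb]
        have : 0 < (ηh n / η n) * a n :=
          mul_pos (div_pos (hηhpos n) (hηpos n)) hpa
        linarith
      · rw [hAn n hb]; linarith
  -- step inequality for non-backtracking iterations
  have hstep : ∀ n ∉ B, Real.sqrt (A n) + Real.sqrt (η n) / 2 ≤ Real.sqrt (A (n + 1)) := by
    intro n hb
    have hA := hAnn n
    have hη := (hηpos n).le
    have h4 : (4 : ℝ) * η n * A n = (2 * Real.sqrt (η n) * Real.sqrt (A n)) ^ 2 := by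
      rw [mul_pow, mul_pow, Real.sq_sqrt hη, Real.sq_sqrt hA]; ring
    have hsq : 2 * Real.sqrt (η n) * Real.sqrt (A n)
        ≤ Real.sqrt ((η n) ^ 2 + 4 * η n * A n) := by
      have h1 : (2 * Real.sqrt (η n) * Real.sqrt (A n)) ^ 2 ≤ (η n) ^ 2 + 4 * η n * A n := by
        nlinarith [sq_nonneg (η n)]
      have h2 : 0 ≤ 2 * Real.sqrt (η n) * Real.sqrt (A n) := by positivity
      nlinarith [Real.sq_sqrt (by nlinarith [sq_nonneg (η n)] :
          (0:ℝ) ≤ (η n) ^ 2 + 4 * η n * A n),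
        Real.sqrt_nonneg ((η n) ^ 2 + 4 * η n * A n)]
    have hlb : A n + η n / 2 + Real.sqrt (η n) * Real.sqrt (A n) ≤ A (n + 1) := by
      rw [hAn n hb, ha n]; linarith
    have hsqr : (Real.sqrt (A n) + Real.sqrt (η n) / 2) ^ 2 ≤ A (n + 1) := by
      have e1 := Real.sq_sqrt hA
      have e2 := Real.sq_sqrt hη
      nlinarith [hηpos n]
    calc Real.sqrt (A n) + Real.sqrt (η n) / 2
        = Real.sqrt ((Real.sqrt (A n) + Real.sqrt (η n) / 2) ^ 2) := by
          rw [Real.sqrt_sq (by positivity)]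
      _ ≤ Real.sqrt (A (n + 1)) := Real.sqrt_le_sqrt hsqr
  -- monotone for backtracking iterations
  have hmono : ∀ n ∈ B, Real.sqrt (A n) ≤ Real.sqrt (A (n + 1)) := by
    intro n hb
    apply Real.sqrt_le_sqrt
    rw [hAb n hb]
    have : 0 < (ηh n / η n) * a n :=
      mul_pos (div_pos (hηhpos n) (hηpos n)) (hapos n (hAnn n))
    linarith
  have hA1 : A 1 = ηh 0 := by
    have ha0 : a 0 = η 0 := by
      rw [ha 0, hA0]
      have h0 : (η 0) ^ 2 + 4 * η 0 * 0 = (η 0) ^ 2 := by ring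
      rw [h0, Real.sqrt_sq (hηpos 0).le]; ring
    by_cases hb : (0 : ℕ) ∈ B
    · rw [hAb 0 hb, hA0, ha0, zero_add, div_mul_cancel₀ _ (hηpos 0).ne']
    · rw [hAn 0 hb, hA0, ha0, zero_add, heq 0 hb]
  have key : ∀ M, 1 ≤ M → Real.sqrt (ηh 0)
      + ∑ k ∈ (Finset.Ico 1 M).filter (fun k => k ∉ B), Real.sqrt (ηh k)
      ≤ 2 * Real.sqrt (A M) := by
    intro M hM
    induction M, hM using Nat.le_induction with
    | base =>
      simp only [Finset.Ico_self, Finset.filter_empty, Finset.sum_empty, add_zero, hA1]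
      have := Real.sqrt_nonneg (ηh 0)
      linarith
    | succ n hn ih =>
      rw [Finset.sum_filter] at ih ⊢
      rw [Finset.sum_Ico_succ_top hn]
      by_cases hb : n ∈ B
      · simp only [hb, not_true_eq_false, if_false, add_zero]
        have := hmono n hb
        linarith
      · simp only [hb, not_false_eq_true, if_true]
        have h1 := hstep n hb
        rw [← heq n hb] at h1
        linarith
  have hS := key N hN
  have hS0 : 0 ≤ Real.sqrt (ηh 0)
      + ∑ k ∈ (Finset.Ico 1 N).filter (fun k => k ∉ B), Real.sqrt (ηh k) := by
    have : 0 ≤ ∑ k ∈ (Finset.Ico 1 N).filter (fun k => k ∉ B), Real.sqrt (ηh k) :=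
      Finset.sum_nonneg fun k _ => Real.sqrt_nonneg _
    have := Real.sqrt_nonneg (ηh 0)
    linarith
  nlinarith [Real.sq_sqrt (hAnn N), Real.sqrt_nonneg (A N)]
end

section
/- Let β ∈ (0,1), let (η_k)_{k≥0} and (η̂_k)_{k≥0} be sequences of positive reals, and let B ⊆ ℕ be a set of indices such that: η̂_k = η_k for k ∉ B; η̂_k ≤ β·η_k for k ∈ B; η_{k+1} = η̂_k/β for k ∉ B; and η_{k+1} = η̂_k for k ∈ B. Then for every N ≥ 1: (i) Σ_{1 ≤ k ≤ N−1, k ∈ B} √η̂_k ≤ (1/(1−√β))·(√η̂_0 + Σ_{1 ≤ k ≤ N−1, k ∉ B} √η̂_k); and (ii) √η̂_0 + Σ_{1 ≤ k ≤ N−1, k ∉ B} √η̂_k ≥ ((1−√β)/(2−√β))·Σ_{k=0}^{N−1} √η̂_k. -/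
/-- Step-size dynamics of the backtracking line search: the accepted step
sizes of the backtracking iterations are dominated by those of the non-backtracking ones. -/
theorem stmt3
    (β : ℝ) (hβ0 : 0 < β) (hβ1 : β < 1)
    (η ηh : ℕ → ℝ) (hηpos : ∀ k, 0 < η k) (hηhpos : ∀ k, 0 < ηh k)
    (B : Set ℕ) [DecidablePred (· ∈ B)]
    (heq : ∀ k ∉ B, ηh k = η k) (hle : ∀ k ∈ B, ηh k ≤ β * η k)
    (hnext1 : ∀ k ∉ B, η (k + 1) = ηh k / β)
    (hnext2 : ∀ k ∈ B, η (k + 1) = ηh k)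
    (N : ℕ) (hN : 1 ≤ N) :
    (∑ k ∈ (Finset.Ico 1 N).filter (fun k => k ∈ B), Real.sqrt (ηh k)
        ≤ (1 / (1 - Real.sqrt β)) *
          (Real.sqrt (ηh 0)
            + ∑ k ∈ (Finset.Ico 1 N).filter (fun k => k ∉ B), Real.sqrt (ηh k)))
    ∧ ((1 - Real.sqrt β) / (2 - Real.sqrt β)) * ∑ k ∈ Finset.range N, Real.sqrt (ηh k)
        ≤ Real.sqrt (ηh 0)
            + ∑ k ∈ (Finset.Ico 1 N).filter (fun k => k ∉ B), Real.sqrt (ηh k) := by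
  set s := Real.sqrt β with hsdef
  have hs0 : 0 < s := Real.sqrt_pos.mpr hβ0
  have hs1 : s < 1 := by
    have h := Real.sqrt_lt_sqrt hβ0.le hβ1
    simpa using h
  have hs1' : (0:ℝ) < 1 - s := by linarith
  -- backtracking decay
  have hB : ∀ k ∈ B, Real.sqrt (ηh k) ≤ s * Real.sqrt (η k) := by
    intro k hk
    have h1 : Real.sqrt (ηh k) ≤ Real.sqrt (β * η k) := Real.sqrt_le_sqrt (hle k hk)
    rwa [Real.sqrt_mul hβ0.le] at h1
  -- non-backtracking relation
  have hnB : ∀ k ∉ B, s * Real.sqrt (η (k + 1)) = Real.sqrt (ηh k) := by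
    intro k hk
    rw [hnext1 k hk, Real.sqrt_div (hηhpos k).le, ← hsdef]
    field_simp
  have key : ∀ M, 1 ≤ M →
      (1 - s) * ∑ k ∈ (Finset.Ico 1 M).filter (fun k => k ∈ B), Real.sqrt (ηh k)
        ≤ (Real.sqrt (ηh 0)
            + ∑ k ∈ (Finset.Ico 1 M).filter (fun k => k ∉ B), Real.sqrt (ηh k))
          - s * Real.sqrt (η M) := by
    intro M hM
    induction M, hM using Nat.le_induction with
    | base =>
      simp only [Finset.Ico_self, Finset.filter_empty, Finset.sum_empty, mul_zero, add_zero]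
      by_cases h0 : (0 : ℕ) ∈ B
      · rw [hnext2 0 h0]
        have h1 : 0 ≤ Real.sqrt (ηh 0) := Real.sqrt_nonneg _
        nlinarith
      · have h1 := hnB 0 h0
        rw [show (0:ℕ) + 1 = 1 from rfl] at h1
        linarith
    | succ M hM ih =>
      rw [Finset.sum_filter, Finset.sum_filter, Finset.sum_Ico_succ_top hM,
        Finset.sum_Ico_succ_top hM, ← Finset.sum_filter, ← Finset.sum_filter]
      by_cases hMB : M ∈ B
      · simp only [hMB, if_true, not_true, if_false, add_zero]
        rw [hnext2 M hMB]
        have h1 := hB M hMB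
        have h2 : 0 ≤ Real.sqrt (ηh M) := Real.sqrt_nonneg _
        nlinarith
      · simp only [hMB, if_false, not_false_iff, if_true, add_zero]
        have h1 := hnB M hMB
        have h2 : 0 ≤ Real.sqrt (η M) := Real.sqrt_nonneg _
        have h3 : 0 ≤ s * Real.sqrt (η M) := by positivity
        linarith
  have hkey := key N hN
  have hηN : 0 ≤ s * Real.sqrt (η N) := by positivity
  constructor
  · rw [one_div_mul_eq_div, le_div_iff₀ hs1']
    linarith
  · have hsplit : ∑ k ∈ Finset.range N, Real.sqrt (ηh k)
        = Real.sqrt (ηh 0) + ∑ k ∈ Finset.Ico 1 N, Real.sqrt (ηh k) := by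
      rw [Finset.range_eq_Ico, Finset.sum_eq_sum_Ico_succ_bot hN]
    have hpart : ∑ k ∈ Finset.Ico 1 N, Real.sqrt (ηh k)
        = (∑ k ∈ (Finset.Ico 1 N).filter (fun k => k ∈ B), Real.sqrt (ηh k))
          + ∑ k ∈ (Finset.Ico 1 N).filter (fun k => k ∉ B), Real.sqrt (ηh k) :=
      (Finset.sum_filter_add_sum_filter_not _ _ _).symm
    rw [hsplit, hpart, div_mul_eq_mul_div, div_le_iff₀ (by linarith : (0:ℝ) < 2 - s)]
    nlinarith
end

section
/- Let β ∈ (0,1), let (η_k)_{k≥0} and (η̂_k)_{k≥0} be sequences of positive reals, and let B ⊆ ℕ be a set of indices such that: η̂_k = η_k for k ∉ B; η̂_k ≤ β·η_k for k ∈ B; η_{k+1} = η̂_k/β for k ∉ B; and η_{k+1} = η̂_k for k ∈ B. Define A_0 = 0, a_k = (η_k + √(η_k² + 4 η_k A_k))/2, and A_{k+1} = A_k + a_k if k ∉ B, A_{k+1} = A_k + (η̂_k/η_k)·a_k if k ∈ B. Then for every N ≥ 1, A_N ≥ ((1−√β)²/(4(2−√β)²))·(Σ_{k=0}^{N−1}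 √η̂_k)². -/
/-!
Write `s = √β`. Along the iteration the potential
`((1 - s) ∑_{k<n} √η̂_k + s √η_n) / (2 (2 - s))` stays below `√A_n`. A step without backtracking
raises `√A` by at least `√η_k / 2`, because `a_k ≥ η_k / 2 + √(η_k A_k)`, and raises the potential
by at most as much, since `η_{k+1} = η_k / β`. A backtracking step does not increase the potential,
because `√η̂_k ≤ s √η_k` and `η_{k+1} = η̂_k`, while `A` never decreases. Dropping the term
`s √η_n` and squaring gives the bound.
-/

open Finset Real

/-- The positive root `a` of `η (A + a) = a²`. -/
noncomputable def msRoot (η A : ℝ) : ℝ := (η + √(η ^ 2 + 4 * η * A)) / 2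

section msRoot

variable {η A : ℝ}

lemma le_msRoot (hη : 0 ≤ η) (hA : 0 ≤ A) : η ≤ msRoot η A := by
  have : η ≤ √(η ^ 2 + 4 * η * A) := Real.le_sqrt_of_sq_le (by nlinarith [mul_nonneg hη hA])
  unfold msRoot
  linarith

lemma le_div_mul_msRoot {η' : ℝ} (hη : 0 < η) (hη' : 0 ≤ η') (hA : 0 ≤ A) :
    η' ≤ η' / η * msRoot η A := by
  calc η' = η' / η * η := (div_mul_cancel₀ η' hη.ne').symm
    _ ≤ η' / η * msRoot η A := by gcongr; exact le_msRoot hη.le hA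

lemma half_add_sqrt_mul_sqrt_le_msRoot (hη : 0 ≤ η) (hA : 0 ≤ A) :
    η / 2 + √η * √A ≤ msRoot η A := by
  have : 2 * (√η * √A) ≤ √(η ^ 2 + 4 * η * A) := by
    apply Real.le_sqrt_of_sq_le
    rw [mul_pow, mul_pow, sq_sqrt hη, sq_sqrt hA]
    nlinarith [sq_nonneg η]
  unfold msRoot
  linarith

lemma sqrt_add_half_sqrt_le_sqrt_add_msRoot (hη : 0 ≤ η) (hA : 0 ≤ A) :
    √A + √η / 2 ≤ √(A + msRoot η A) := by
  apply Real.le_sqrt_of_sq_le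
  have := half_add_sqrt_mul_sqrt_le_msRoot hη hA
  nlinarith [sq_sqrt hη, sq_sqrt hA]

end msRoot

/-- In the application `z k = √η̂_k` and `y k = √η_k`. -/
noncomputable def potential (s : ℝ) (z y : ℕ → ℝ) (n : ℕ) : ℝ :=
  ((1 - s) * ∑ k ∈ range n, z k + s * y n) / (2 * (2 - s))

section potential

variable {s : ℝ} {z y : ℕ → ℝ}

lemma potential_succ_le_of_le {k : ℕ} (hs : s < 2) (hz : z k ≤ s * y k) (hy : y (k + 1) = z k) :
    potential s z y (k + 1) ≤ potential s z y k := by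
  unfold potential
  rw [sum_range_succ, hy]
  gcongr ?_ / _
  linarith

lemma potential_succ_le_add {k : ℕ} (hs0 : 0 < s) (hs2 : s < 2) (hy0 : 0 ≤ y k)
    (hz : z k = y k) (hy : y (k + 1) = y k / s) :
    potential s z y (k + 1) ≤ potential s z y k + y k / 2 := by
  have hD : 0 < 2 * (2 - s) := by linarith
  unfold potential
  rw [sum_range_succ, hz, hy, mul_div_cancel₀ _ hs0.ne', div_add' _ _ _ hD.ne',
    div_le_div_iff_of_pos_right hD]
  nlinarith [mul_nonneg hs0.le hy0]

lemma potential_one_le (hs0 : 0 < s) (hs1 : s ≤ 1) (hz : 0 ≤ z 0)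
    (hy : y 1 = z 0 ∨ y 1 = z 0 / s) : potential s z y 1 ≤ z 0 := by
  unfold potential
  rw [sum_range_one, div_le_iff₀ (by linarith)]
  rcases hy with hy | hy <;> rw [hy]
  · nlinarith
  · rw [mul_div_cancel₀ _ hs0.ne']
    nlinarith

lemma mul_sum_le_potential {n : ℕ} (hs0 : 0 ≤ s) (hs2 : s < 2) (hy : 0 ≤ y n) :
    (1 - s) / (2 * (2 - s)) * ∑ k ∈ range n, z k ≤ potential s z y n := by
  unfold potential
  rw [div_mul_eq_mul_div]
  gcongr ?_ / _
  linarith [mul_nonneg hs0 hy]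

theorem potential_le (hs0 : 0 < s) (hs1 : s < 1) (x : ℕ → ℝ) (B : Set ℕ)
    (hy : ∀ k, 0 ≤ y k) (hz : 0 ≤ z 0)
    (hmem : ∀ k ∈ B, z k ≤ s * y k ∧ y (k + 1) = z k ∧ x k ≤ x (k + 1))
    (hnot : ∀ k ∉ B, z k = y k ∧ y (k + 1) = y k / s ∧ x k + y k / 2 ≤ x (k + 1))
    (hx1 : z 0 ≤ x 1) {n : ℕ} (hn : 1 ≤ n) : potential s z y n ≤ x n := by
  induction n, hn using Nat.le_induction with
  | base =>
    refine (potential_one_le hs0 hs1.le hz ?_).trans hx1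
    by_cases h0 : 0 ∈ B
    · exact .inl (hmem 0 h0).2.1
    · obtain ⟨hz0, hy1, -⟩ := hnot 0 h0
      exact .inr (hz0 ▸ hy1)
  | succ k _ ih =>
    by_cases hk : k ∈ B
    · obtain ⟨hzk, hyk, hxk⟩ := hmem k hk
      exact ((potential_succ_le_of_le (by linarith) hzk hyk).trans ih).trans hxk
    · obtain ⟨hzk, hyk, hxk⟩ := hnot k hk
      linarith [potential_succ_le_add hs0 (by linarith) (hy k) hzk hyk]

end potential

theorem stmt4_general
    (β : ℝ) (hβ0 : 0 < β) (hβ1 : β < 1)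
    (η ηh : ℕ → ℝ) (hηpos : ∀ k, 0 < η k) (hηhpos : ∀ k, 0 < ηh k)
    (B : Set ℕ)
    (heq : ∀ k ∉ B, ηh k = η k) (hle : ∀ k ∈ B, ηh k ≤ β * η k)
    (hnext1 : ∀ k ∉ B, η (k + 1) = ηh k / β)
    (hnext2 : ∀ k ∈ B, η (k + 1) = ηh k)
    (A a : ℕ → ℝ)
    (hA0 : A 0 = 0)
    (ha : ∀ k, a k = (η k + Real.sqrt ((η k) ^ 2 + 4 * η k * A k)) / 2)
    (hAn : ∀ k ∉ B, A (k + 1) = A k + a k)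
    (hAb : ∀ k ∈ B, A (k + 1) = A k + (ηh k / η k) * a k)
    (N : ℕ) (hN : 1 ≤ N) :
    ((1 - Real.sqrt β) ^ 2 / (4 * (2 - Real.sqrt β) ^ 2)) *
        (∑ k ∈ Finset.range N, Real.sqrt (ηh k)) ^ 2
      ≤ A N := by
  have ha' : ∀ k, a k = msRoot (η k) (A k) := ha
  have hgrow : ∀ k, 0 ≤ A k → A k + ηh k ≤ A (k + 1) := by
    intro k hAk
    by_cases hk : k ∈ B
    · rw [hAb k hk, ha']
      exact (add_le_add_iff_left _).2 (le_div_mul_msRoot (hηpos k) (hηhpos k).le hAk)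
    · rw [hAn k hk, ha', heq k hk]
      exact (add_le_add_iff_left _).2 (le_msRoot (hηpos k).le hAk)
  have hA : ∀ k, 0 ≤ A k := by
    intro k
    induction k with
    | zero => exact hA0.ge
    | succ k ih => linarith [hgrow k ih, hηhpos k]
  have hs0 : 0 < √β := sqrt_pos.2 hβ0
  have hs1 : √β < 1 := (sqrt_lt' one_pos).2 (by simpa using hβ1)
  have hpot := potential_le (z := fun k ↦ √(ηh k)) (y := fun k ↦ √(η k)) hs0 hs1
    (fun k ↦ √(A k)) B (fun k ↦ sqrt_nonneg (η k))
    (sqrt_nonneg (ηh 0))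
    (fun k hk ↦ ⟨by rw [← sqrt_mul hβ0.le]; exact sqrt_le_sqrt (hle k hk),
      by rw [hnext2 k hk], sqrt_le_sqrt (by linarith [hgrow k (hA k), hηhpos k])⟩)
    (fun k hk ↦ ⟨by rw [heq k hk], by rw [hnext1 k hk, heq k hk, sqrt_div' _ hβ0.le],
      by rw [hAn k hk, ha']; exact sqrt_add_half_sqrt_le_sqrt_add_msRoot (hηpos k).le (hA k)⟩)
    (sqrt_le_sqrt (by linarith [hgrow 0 (hA 0)])) hN
  have hsum := (mul_sum_le_potential hs0.le (by linarith) (sqrt_nonneg (η N))).trans hpot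
  have hcoef : (1 - √β) ^ 2 / (4 * (2 - √β) ^ 2) = ((1 - √β) / (2 * (2 - √β))) ^ 2 := by
    rw [div_pow, mul_pow]; norm_num
  rw [hcoef, ← mul_pow]
  exact (Real.le_sqrt (mul_nonneg (div_nonneg (by linarith) (by linarith))
    (sum_nonneg fun k _ ↦ sqrt_nonneg _)) (hA N)).1 hsum

/-- Lower bound on the Monteiro–Svaiter weights `A_N` in terms of all
accepted step sizes, under the coupled step-size and weight dynamics. -/
theorem stmt4
    (β : ℝ) (hβ0 : 0 < β) (hβ1 : β < 1)
    (η ηh : ℕ → ℝ) (hηpos : ∀ k, 0 < η k) (hηhpos : ∀ k, 0 < ηh k)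
    (B : Set ℕ) [DecidablePred (· ∈ B)]
    (heq : ∀ k ∉ B, ηh k = η k) (hle : ∀ k ∈ B, ηh k ≤ β * η k)
    (hnext1 : ∀ k ∉ B, η (k + 1) = ηh k / β)
    (hnext2 : ∀ k ∈ B, η (k + 1) = ηh k)
    (A a : ℕ → ℝ)
    (hA0 : A 0 = 0)
    (ha : ∀ k, a k = (η k + Real.sqrt ((η k) ^ 2 + 4 * η k * A k)) / 2)
    (hAn : ∀ k ∉ B, A (k + 1) = A k + a k)
    (hAb : ∀ k ∈ B, A (k + 1) = A k + (ηh k / η k) * a k)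
    (N : ℕ) (hN : 1 ≤ N) :
    ((1 - Real.sqrt β) ^ 2 / (4 * (2 - Real.sqrt β) ^ 2)) *
        (∑ k ∈ Finset.range N, Real.sqrt (ηh k)) ^ 2
      ≤ A N :=
  stmt4_general β hβ0 hβ1 η ηh hηpos hηhpos B heq hle hnext1 hnext2 A a hA0 ha hAn hAb N hN
end

section
/- Let B be a real symmetric positive semidefinite d×d matrix, g, y ∈ ℝ^d, α₁ ∈ [0,1), β ∈ (0,1), η̂ > 0, and η̃ = η̂/β. Suppose x̂ ∈ ℝ^d satisfies ‖(I + η̂B)(x̂ − y) + η̂·g‖ ≤ α₁‖x̂ − y‖ and x̃ ∈ ℝ^d satisfies ‖(I + η̃B)(x̃ − y) + η̃·g‖ ≤ α₁‖x̃ − y‖. Then ‖x̃ − y‖ ≤ ((1+α₁)/(β(1−α₁)))·‖x̂ − y‖. -/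
/-! Write `u = x̂ - y`, `v = x̃ - y` and let `r̂`, `r̃` be the two residuals. Since `η̂ = β η̃` and
`1 + η̂ B = β (1 + η̃ B) + (1 - β)`, eliminating `g` gives
`β (1 + η̃ B)(v - u) = β r̃ - r̂ + (1 - β) u`.
For positive semidefinite `B`, `⟪(1 + η̃ B) w, w⟫ ≥ ‖w‖²`, so `1 + η̃ B` does not shrink norms and
`β ‖v - u‖ ≤ β α₁ ‖v‖ + (1 - β + α₁) ‖u‖`, and the triangle inequality
`‖v‖ ≤ ‖u‖ + ‖v - u‖` finishes the proof. -/

noncomputable section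

/-- The continuous linear map on Euclidean space induced by a square real matrix. -/
def matCLM {d : ℕ} (M : Matrix (Fin d) (Fin d) ℝ) :
    EuclideanSpace ℝ (Fin d) →L[ℝ] EuclideanSpace ℝ (Fin d) :=
  Matrix.toEuclideanCLM (𝕜 := ℝ) M

open scoped RealInnerProductSpace

section InnerProductSpace

variable {E : Type*} [NormedAddCommGroup E] [InnerProductSpace ℝ E]

theorem norm_le_norm_add_of_inner_nonneg {w z : E} (h : 0 ≤ ⟪z, w⟫) : ‖w‖ ≤ ‖w + z‖ := by
  rcases (norm_nonneg w).eq_or_lt with hw | hw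
  · rw [← hw]
    exact norm_nonneg _
  refine le_of_mul_le_mul_right ?_ hw
  calc ‖w‖ * ‖w‖ = ⟪w, w⟫ := (real_inner_self_eq_norm_mul_norm w).symm
    _ ≤ ⟪w + z, w⟫ := by rw [inner_add_left]; linarith
    _ ≤ ‖w + z‖ * ‖w‖ := real_inner_le_norm _ _

theorem norm_le_norm_add_smul_apply (T : E →ₗ[ℝ] E) (hT : ∀ w, 0 ≤ ⟪T w, w⟫) {η : ℝ}
    (hη : 0 ≤ η) (w : E) : ‖w‖ ≤ ‖w + η • T w‖ :=
  norm_le_norm_add_of_inner_nonneg <| by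
    rw [real_inner_smul_left]
    exact mul_nonneg hη (hT w)

theorem mul_norm_le_of_inexact_resolvent (T : E →ₗ[ℝ] E) (hT : ∀ w, 0 ≤ ⟪T w, w⟫)
    {g u v : E} {α β η : ℝ} (hβ0 : 0 < β) (hβ1 : β ≤ 1) (hη : 0 ≤ η)
    (hu : ‖u + (β * η) • T u + (β * η) • g‖ ≤ α * ‖u‖)
    (hv : ‖v + η • T v + η • g‖ ≤ α * ‖v‖) :
    β * (1 - α) * ‖v‖ ≤ (1 + α) * ‖u‖ := by
  have hres : β • (v - u + η • T (v - u)) =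
      β • (v + η • T v + η • g) - (u + (β * η) • T u + (β * η) • g) + (1 - β) • u := by
    rw [map_sub]
    module
  have hdiff : β * ‖v - u‖ ≤ β * (α * ‖v‖) + α * ‖u‖ + (1 - β) * ‖u‖ :=
    calc β * ‖v - u‖ ≤ β * ‖v - u + η • T (v - u)‖ :=
          mul_le_mul_of_nonneg_left (norm_le_norm_add_smul_apply T hT hη _) hβ0.le
      _ = ‖β • (v - u + η • T (v - u))‖ := by rw [norm_smul, Real.norm_of_nonneg hβ0.le]
      _ ≤ ‖β • (v + η • T v + η • g)‖ + ‖u + (β * η) • T u + (β * η) • g‖ + ‖(1 - β) • u‖ := by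
          rw [hres]
          exact (norm_add_le _ _).trans (add_le_add_left (norm_sub_le _ _) _)
      _ ≤ β * (α * ‖v‖) + α * ‖u‖ + (1 - β) * ‖u‖ := by
          rw [norm_smul, norm_smul, Real.norm_of_nonneg hβ0.le,
            Real.norm_of_nonneg (sub_nonneg.2 hβ1)]
          gcongr
  have htri : β * ‖v‖ ≤ β * ‖u‖ + β * ‖v - u‖ := by
    rw [← mul_add]
    exact mul_le_mul_of_nonneg_left (norm_le_norm_add_norm_sub' v u) hβ0.le
  linarith

end InnerProductSpace

theorem matCLM_one_add_smul_apply {d : ℕ} (B : Matrix (Fin d) (Fin d) ℝ) (η : ℝ)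
    (w : EuclideanSpace ℝ (Fin d)) : matCLM (1 + η • B) w = w + η • matCLM B w := by
  simp [matCLM]

theorem Matrix.PosSemidef.inner_matCLM_self_nonneg {d : ℕ} {B : Matrix (Fin d) (Fin d) ℝ}
    (hB : B.PosSemidef) (w : EuclideanSpace ℝ (Fin d)) : 0 ≤ ⟪matCLM B w, w⟫ := by
  rw [real_inner_comm, matCLM, Matrix.inner_toEuclideanCLM]
  exact hB.dotProduct_mulVec_nonneg w

theorem stmt6_general {d : ℕ}
    (B : Matrix (Fin d) (Fin d) ℝ) (hB : B.PosSemidef)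
    (g y : EuclideanSpace ℝ (Fin d))
    (α₁ β ηhat ηt : ℝ) (hα₁1 : α₁ < 1) (hβ0 : 0 < β) (hβ1 : β < 1)
    (hηhat : 0 < ηhat) (hηt : ηt = ηhat / β)
    (xhat xt : EuclideanSpace ℝ (Fin d))
    (h1 : ‖matCLM (1 + ηhat • B) (xhat - y) + ηhat • g‖ ≤ α₁ * ‖xhat - y‖)
    (h2 : ‖matCLM (1 + ηt • B) (xt - y) + ηt • g‖ ≤ α₁ * ‖xt - y‖) :
    ‖xt - y‖ ≤ ((1 + α₁) / (β * (1 - α₁))) * ‖xhat - y‖ := by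
  have hstep : ηhat = β * ηt := by rw [hηt, mul_div_cancel₀ _ hβ0.ne']
  rw [matCLM_one_add_smul_apply, hstep] at h1
  rw [matCLM_one_add_smul_apply] at h2
  have key := mul_norm_le_of_inexact_resolvent (matCLM B).toLinearMap
    hB.inner_matCLM_self_nonneg hβ0 hβ1.le (by rw [hηt]; positivity) h1 h2
  rw [div_mul_eq_mul_div, le_div_iff₀ (mul_pos hβ0 (sub_pos.2 hα₁1))]
  linarith

/-- Displacement of the rejected line-search iterate (with step size
`η̃ = η̂/β`) is controlled by the displacement of the accepted iterate. -/
theorem stmt6 {d : ℕ}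
    (B : Matrix (Fin d) (Fin d) ℝ) (hB : B.PosSemidef)
    (g y : EuclideanSpace ℝ (Fin d))
    (α₁ β ηhat ηt : ℝ) (hα₁0 : 0 ≤ α₁) (hα₁1 : α₁ < 1) (hβ0 : 0 < β) (hβ1 : β < 1)
    (hηhat : 0 < ηhat) (hηt : ηt = ηhat / β)
    (xhat xt : EuclideanSpace ℝ (Fin d))
    (h1 : ‖matCLM (1 + ηhat • B) (xhat - y) + ηhat • g‖ ≤ α₁ * ‖xhat - y‖)
    (h2 : ‖matCLM (1 + ηt • B) (xt - y) + ηt • g‖ ≤ α₁ * ‖xt - y‖) :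
    ‖xt - y‖ ≤ ((1 + α₁) / (β * (1 - α₁))) * ‖xhat - y‖ :=
  stmt6_general B hB g y α₁ β ηhat ηt hα₁1 hβ0 hβ1 hηhat hηt xhat xt h1 h2
end
end

section
/- Let β ∈ (0,1), σ₀ > 0, let (η_k)_{k≥0} and (η̂_k)_{k≥0} be sequences of positive reals with η₀ = σ₀, and let B ⊆ ℕ be a set of indices such that: η̂_k = η_k for k ∉ B; η̂_k ≤ β·η_k for k ∈ B; η_{k+1} = η̂_k/β for k ∉ B; and η_{k+1} = η̂_k for k ∈ B. Then for every N ≥ 1, Σ_{k=0}^{N−1} 1/η̂_k² ≤ (2−β²)/((1−β²)·σ₀²) + ((2−β²)/(1−β²))·Σ_{0 ≤ k ≤ N−1, k ∈ B} 1/η̂_k². -/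
/-!
Write `a k = 1 / η k ^ 2`. Off `B` the trial step grows by `1 / β`, so `a` contracts by `β ^ 2`,
and `(1 - β ^ 2) a k + a (k + 1) = a k`; on `B` the next value `a (k + 1)` is the accepted
`1 / η̂ k ^ 2`. Telescoping bounds `(1 - β ^ 2)` times the non-backtracking part of the sum by
`1 / σ₀ ^ 2` plus the backtracking part, and the accepted steps off `B` are the trial ones.
-/

open Finset

theorem mul_sum_filter_not_mem_add_le {B : Set ℕ} [DecidablePred (· ∈ B)] {a b : ℕ → ℝ} {c : ℝ}
    (ha : ∀ k, 0 ≤ a k) (hnot : ∀ k ∉ B, a (k + 1) = (1 - c) * a k)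
    (hmem : ∀ k ∈ B, a (k + 1) = b k) (N : ℕ) :
    c * ∑ k ∈ (range N).filter (· ∉ B), a k + a N
      ≤ a 0 + ∑ k ∈ (range N).filter (· ∈ B), b k := by
  induction N with
  | zero => simp
  | succ N ih =>
    rw [range_add_one, filter_insert, filter_insert]
    by_cases hN : N ∈ B
    · rw [if_neg (not_not.mpr hN), if_pos hN, sum_insert (by simp), hmem N hN]
      linarith [ha N]
    · rw [if_pos hN, if_neg hN, sum_insert (by simp), hnot N hN]
      linarith

theorem one_div_sq_div (x β : ℝ) : 1 / (x / β) ^ 2 = β ^ 2 * (1 / x ^ 2) := by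
  rw [div_pow, one_div_div]
  ring

theorem stmt8_general
    (β σ₀ : ℝ) (hβ0 : 0 < β) (hβ1 : β < 1)
    (η ηh : ℕ → ℝ) (hη0 : η 0 = σ₀)
    (B : Set ℕ) [DecidablePred (· ∈ B)]
    (heq : ∀ k ∉ B, ηh k = η k)
    (hnext1 : ∀ k ∉ B, η (k + 1) = ηh k / β)
    (hnext2 : ∀ k ∈ B, η (k + 1) = ηh k)
    (N : ℕ) :
    ∑ k ∈ Finset.range N, 1 / (ηh k) ^ 2
      ≤ (2 - β ^ 2) / ((1 - β ^ 2) * σ₀ ^ 2)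
        + ((2 - β ^ 2) / (1 - β ^ 2)) *
            ∑ k ∈ (Finset.range N).filter (fun k => k ∈ B), 1 / (ηh k) ^ 2 := by
  have hc : 0 < 1 - β ^ 2 := by nlinarith
  set SB := ∑ k ∈ (range N).filter (· ∈ B), 1 / ηh k ^ 2
  set SnotB := ∑ k ∈ (range N).filter (· ∉ B), 1 / η k ^ 2
  have htelescope := mul_sum_filter_not_mem_add_le (a := fun k => 1 / η k ^ 2)
    (b := fun k => 1 / ηh k ^ 2) (c := 1 - β ^ 2) (fun k => by positivity)
    (fun k hk => by rw [hnext1 k hk, heq k hk, one_div_sq_div]; ring)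
    (fun k hk => by rw [hnext2 k hk]) N
  have hsplit : ∑ k ∈ range N, 1 / ηh k ^ 2 = SnotB + SB := by
    rw [← sum_filter_add_sum_filter_not (range N) (· ∈ B), add_comm]
    congr 1
    exact sum_congr rfl fun k hk => by rw [heq k (mem_filter.mp hk).2]
  have hSnotB : SnotB ≤ (1 / σ₀ ^ 2 + SB) / (1 - β ^ 2) := by
    rw [le_div_iff₀ hc]
    simp only [hη0] at htelescope
    linarith [show 0 ≤ 1 / η N ^ 2 by positivity]
  have hrhs : (2 - β ^ 2) / ((1 - β ^ 2) * σ₀ ^ 2) + (2 - β ^ 2) / (1 - β ^ 2) * SB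
      = (1 / σ₀ ^ 2 + SB) / (1 - β ^ 2) + SB + 1 / σ₀ ^ 2 := by
    field_simp
    ring
  rw [hsplit, hrhs]
  linarith [show 0 ≤ 1 / σ₀ ^ 2 by positivity]

/-- The sum of the inverse squared accepted step sizes is controlled by the
contribution of the backtracking iterations (key inequality in Lemma 2 of the paper). -/
theorem stmt8
    (β σ₀ : ℝ) (hβ0 : 0 < β) (hβ1 : β < 1) (hσ₀ : 0 < σ₀)
    (η ηh : ℕ → ℝ) (hη0 : η 0 = σ₀)
    (hηpos : ∀ k, 0 < η k) (hηhpos : ∀ k, 0 < ηh k)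
    (B : Set ℕ) [DecidablePred (· ∈ B)]
    (heq : ∀ k ∉ B, ηh k = η k) (hle : ∀ k ∈ B, ηh k ≤ β * η k)
    (hnext1 : ∀ k ∉ B, η (k + 1) = ηh k / β)
    (hnext2 : ∀ k ∈ B, η (k + 1) = ηh k)
    (N : ℕ) (hN : 1 ≤ N) :
    ∑ k ∈ Finset.range N, 1 / (ηh k) ^ 2
      ≤ (2 - β ^ 2) / ((1 - β ^ 2) * σ₀ ^ 2)
        + ((2 - β ^ 2) / (1 - β ^ 2)) *
            ∑ k ∈ (Finset.range N).filter (fun k => k ∈ B), 1 / (ηh k) ^ 2 :=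
  stmt8_general β σ₀ hβ0 hβ1 η ηh hη0 B heq hnext1 hnext2 N
end

section
/- Let f : ℝ^d → ℝ be differentiable with L₁-Lipschitz gradient, i.e. ‖∇f(u) − ∇f(v)‖ ≤ L₁‖u − v‖ for all u, v. Let M be a real d×d matrix, y ∈ ℝ^d, g = ∇f(y), α₁ ≥ 0, α₂ > 0, and let η̂ be a step size with 0 < η̂ ≤ α₂/(L₁ + ‖M‖_op). If x̂ ∈ ℝ^d satisfies ‖x̂ − y + η̂·(g + M(x̂ − y))‖ ≤ α₁‖x̂ − y‖, then ‖x̂ − y + η̂·∇f(x̂)‖ ≤ (α₁ + α₂)‖x̂ − y‖. -/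
noncomputable section

/-- Once the step size is at most `α₂/(L₁ + ‖M‖_op)`, any `α₁`-inexact
solution of the linear system passes the line-search acceptance test with parameter
`α₁ + α₂`. -/
theorem stmt9 {d : ℕ}
    (L₁ : ℝ)
    (f : EuclideanSpace ℝ (Fin d) → ℝ) (hf : Differentiable ℝ f)
    (hlip : ∀ u v : EuclideanSpace ℝ (Fin d),
      ‖gradient f u - gradient f v‖ ≤ L₁ * ‖u - v‖)
    (M : Matrix (Fin d) (Fin d) ℝ)
    (y : EuclideanSpace ℝ (Fin d))
    (α₁ α₂ ηhat : ℝ) (hα₁ : 0 ≤ α₁) (hα₂ : 0 < α₂)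
    (hηhat0 : 0 < ηhat) (hηhat1 : ηhat ≤ α₂ / (L₁ + ‖matCLM M‖))
    (xhat : EuclideanSpace ℝ (Fin d))
    (h1 : ‖xhat - y + ηhat • (gradient f y + matCLM M (xhat - y))‖ ≤ α₁ * ‖xhat - y‖) :
    ‖xhat - y + ηhat • gradient f xhat‖ ≤ (α₁ + α₂) * ‖xhat - y‖ := by
  set s : ℝ := L₁ + ‖matCLM M‖ with hs_def
  have hs : 0 < s := by
    by_contra h
    push_neg at h
    have : α₂ / s ≤ 0 := div_nonpos_of_nonneg_of_nonpos hα₂.le h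
    linarith
  have hkey : ηhat * s ≤ α₂ := by
    rw [le_div_iff₀ hs] at hηhat1; linarith
  have split : xhat - y + ηhat • gradient f xhat =
      (xhat - y + ηhat • (gradient f y + matCLM M (xhat - y))) +
        ηhat • ((gradient f xhat - gradient f y) - matCLM M (xhat - y)) := by
    module
  have hM : ‖matCLM M (xhat - y)‖ ≤ ‖matCLM M‖ * ‖xhat - y‖ :=
    (matCLM M).le_opNorm _
  have h2 : ‖(gradient f xhat - gradient f y) - matCLM M (xhat - y)‖ ≤ s * ‖xhat - y‖ := by
    calc _ ≤ ‖gradient f xhat - gradient f y‖ + ‖matCLM M (xhat - y)‖ := norm_sub_le _ _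
    _ ≤ L₁ * ‖xhat - y‖ + ‖matCLM M‖ * ‖xhat - y‖ := add_le_add (hlip _ _) hM
    _ = s * ‖xhat - y‖ := by ring
  rw [split]
  calc ‖_ + _‖ ≤ ‖xhat - y + ηhat • (gradient f y + matCLM M (xhat - y))‖ +
      ‖ηhat • ((gradient f xhat - gradient f y) - matCLM M (xhat - y))‖ := norm_add_le _ _
  _ ≤ α₁ * ‖xhat - y‖ + ηhat * (s * ‖xhat - y‖) := by
      refine add_le_add h1 ?_
      rw [norm_smul, Real.norm_eq_abs, abs_of_pos hηhat0]
      exact mul_le_mul_of_nonneg_left h2 hηhat0.le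
  _ ≤ (α₁ + α₂) * ‖xhat - y‖ := by nlinarith [norm_nonneg (xhat - y)]

end
end

section
/- Let β ∈ (1/5, 1], η > 0, A ≥ 0, and suppose η' = η/β and A' ≥ A with A' ≥ 0. Define a = (η + √(η² + 4ηA))/2 and a' = (η' + √(η'² + 4η'A'))/2. Then a'/(A' + a') ≤ (1/√β)·(a/(A + a)). -/
/-!
Since `a ^ 2 = η * (A + a)`, the ratio `a / (A + a)` equals `η / a`, and likewise
`a' / (A' + a') = η' / a'`. With `η' = η / β` the claim becomes `a ≤ √β * a'`, which holds
termwise in the root formula: `η ≤ √β * η'` because `β ≤ 1`, and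
`η ^ 2 + 4 η A ≤ β (η' ^ 2 + 4 η' A') = η ^ 2 / β + 4 η A'` because `β ≤ 1` and `A ≤ A'`.
-/

open Real

noncomputable def msWeight (η A : ℝ) : ℝ := (η + √(η ^ 2 + 4 * η * A)) / 2

section msWeight

variable {η A : ℝ}

theorem msWeight_pos (hη : 0 < η) (hA : 0 ≤ A) : 0 < msWeight η A := by
  unfold msWeight; positivity

theorem msWeight_sq (hη : 0 ≤ η) (hA : 0 ≤ A) : msWeight η A ^ 2 = η * (A + msWeight η A) := by
  have hs : √(η ^ 2 + 4 * η * A) ^ 2 = η ^ 2 + 4 * η * A := sq_sqrt (by positivity)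
  unfold msWeight
  linear_combination hs / 4

theorem msWeight_div_add_msWeight (hη : 0 < η) (hA : 0 ≤ A) :
    msWeight η A / (A + msWeight η A) = η / msWeight η A := by
  have ha := msWeight_pos hη hA
  rw [div_eq_div_iff (by linarith) ha.ne']
  linear_combination msWeight_sq hη.le hA

theorem msWeight_le_mul_msWeight {η' A' c : ℝ} (hc : 0 ≤ c) (hη : η ≤ c * η')
    (hrad : η ^ 2 + 4 * η * A ≤ c ^ 2 * (η' ^ 2 + 4 * η' * A')) :
    msWeight η A ≤ c * msWeight η' A' := by
  have hsqrt : √(η ^ 2 + 4 * η * A) ≤ c * √(η' ^ 2 + 4 * η' * A') := by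
    calc √(η ^ 2 + 4 * η * A) ≤ √(c ^ 2 * (η' ^ 2 + 4 * η' * A')) := sqrt_le_sqrt hrad
      _ = c * √(η' ^ 2 + 4 * η' * A') := by rw [sqrt_mul (sq_nonneg c), sqrt_sq hc]
  unfold msWeight
  linarith

end msWeight

theorem msWeight_le_sqrt_mul_msWeight_div {β η A A' : ℝ} (hβ0 : 0 < β) (hβ1 : β ≤ 1)
    (hη : 0 ≤ η) (hAA' : A ≤ A') : msWeight η A ≤ √β * msWeight (η / β) A' := by
  have hsβ : 0 < √β := sqrt_pos.mpr hβ0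
  have hsβ1 : √β ≤ 1 := sqrt_le_one.mpr hβ1
  have hsβ2 : √β ^ 2 = β := sq_sqrt hβ0.le
  apply msWeight_le_mul_msWeight hsβ.le
  · calc η = √β * (η / β) * √β := by rw [mul_right_comm, ← sq, hsβ2]; field_simp
      _ ≤ √β * (η / β) * 1 := by gcongr
      _ = √β * (η / β) := mul_one _
  · calc η ^ 2 + 4 * η * A ≤ η ^ 2 / β + 4 * η * A' := by
          gcongr
          exact le_div_self (sq_nonneg η) hβ0 hβ1
      _ = √β ^ 2 * ((η / β) ^ 2 + 4 * (η / β) * A') := by rw [hsβ2]; field_simp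

theorem stmt11_general
    (β η A η' A' : ℝ)
    (hβ0 : 1 / 5 < β) (hβ1 : β ≤ 1) (hη : 0 < η) (hA : 0 ≤ A)
    (hη' : η' = η / β) (hA'A : A ≤ A')
    (a a' : ℝ)
    (ha : a = (η + Real.sqrt (η ^ 2 + 4 * η * A)) / 2)
    (ha' : a' = (η' + Real.sqrt (η' ^ 2 + 4 * η' * A')) / 2) :
    a' / (A' + a') ≤ (1 / Real.sqrt β) * (a / (A + a)) := by
  have hβ : 0 < β := by linarith
  change a = msWeight η A at ha
  change a' = msWeight η' A' at ha'
  subst ha ha' hη'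
  have hsβ : 0 < √β := sqrt_pos.mpr hβ
  have hsβ2 : √β ^ 2 = β := sq_sqrt hβ.le
  have hpos := msWeight_pos hη hA
  have hpos' := msWeight_pos (div_pos hη hβ) (hA.trans hA'A)
  rw [msWeight_div_add_msWeight hη hA, msWeight_div_add_msWeight (div_pos hη hβ) (hA.trans hA'A)]
  calc η / β / msWeight (η / β) A' = 1 / √β * (η / (√β * msWeight (η / β) A')) := by
        field_simp
        rw [hsβ2]
    _ ≤ 1 / √β * (η / msWeight η A) := by
        gcongr
        exact msWeight_le_sqrt_mul_msWeight_div hβ hβ1 hη.le hA'A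

/-- Case I of the ratio bound for the Monteiro–Svaiter weights:
increasing the step size by `1/β` while the weight does not decrease. -/
theorem stmt11
    (β η A η' A' : ℝ)
    (hβ0 : 1 / 5 < β) (hβ1 : β ≤ 1) (hη : 0 < η) (hA : 0 ≤ A)
    (hη' : η' = η / β) (hA'A : A ≤ A') (hA'0 : 0 ≤ A')
    (a a' : ℝ)
    (ha : a = (η + Real.sqrt (η ^ 2 + 4 * η * A)) / 2)
    (ha' : a' = (η' + Real.sqrt (η' ^ 2 + 4 * η' * A')) / 2) :
    a' / (A' + a') ≤ (1 / Real.sqrt β) * (a / (A + a)) :=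
  stmt11_general β η A η' A' hβ0 hβ1 hη hA hη' hA'A a a' ha ha'
end

section
/- Let β ∈ (1/5, 1), η > 0, A ≥ 0, and γ ∈ (0, β]. Define a = (η + √(η² + 4ηA))/2, and set η' = γη and A' = A + γa. Define a' = (η' + √(η'² + 4η'A'))/2. Then a'/(A' + a') ≤ (2√β/(√β + 1))·(a/(A + a)). -/
private lemma stmt12_aux (s γ : ℝ) (hs0 : 0 < s) (hs1 : s < 1) (hγ : γ ≤ s ^ 2) :
    0 ≤ 4 * s ^ 2 - γ * (s + 1) ^ 2 := by
  nlinarith [mul_le_mul_of_nonneg_right hγ (sq_nonneg (s + 1)),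
    mul_nonneg (mul_nonneg (sq_nonneg s) (by linarith : (0:ℝ) ≤ 1 - s))
      (by linarith : (0:ℝ) ≤ 3 + s)]

/-- Case II of the ratio bound for the Monteiro–Svaiter weights:
in a backtracking iteration the step size shrinks to `γη` with `γ ≤ β` and the
weight increases by `γa`. -/
theorem stmt12
    (β η A γ : ℝ)
    (hβ0 : 1 / 5 < β) (hβ1 : β < 1) (hη : 0 < η) (hA : 0 ≤ A)
    (hγ0 : 0 < γ) (hγβ : γ ≤ β)
    (a : ℝ) (ha : a = (η + Real.sqrt (η ^ 2 + 4 * η * A)) / 2)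
    (η' A' a' : ℝ) (hη' : η' = γ * η) (hA' : A' = A + γ * a)
    (ha' : a' = (η' + Real.sqrt (η' ^ 2 + 4 * η' * A')) / 2) :
    a' / (A' + a') ≤ (2 * Real.sqrt β / (Real.sqrt β + 1)) * (a / (A + a)) := by
  set s := Real.sqrt β with hs
  have hs0 : 0 < s := Real.sqrt_pos.mpr (by linarith)
  have hs2 : s ^ 2 = β := Real.sq_sqrt (by linarith)
  have hs1 : s < 1 := by
    nlinarith [hs2, hs0]
  -- facts about a
  set D := Real.sqrt (η ^ 2 + 4 * η * A) with hD
  have hDnn : 0 ≤ η ^ 2 + 4 * η * A := by positivity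
  have hD2 : D ^ 2 = η ^ 2 + 4 * η * A := Real.sq_sqrt hDnn
  have hDη : η ≤ D := by
    rw [hD]
    have : η = Real.sqrt (η ^ 2) := by
      rw [Real.sqrt_sq hη.le]
    rw [this]
    exact Real.sqrt_le_sqrt (by nlinarith)
  have haη : η ≤ a := by rw [ha]; linarith
  have ha0 : 0 < a := lt_of_lt_of_le hη haη
  have hasq : a ^ 2 = η * (A + a) := by
    rw [ha]; linear_combination (1/4 : ℝ) * hD2
  -- facts about a'
  have hη'0 : 0 < η' := by rw [hη']; positivity
  have hA'0 : 0 ≤ A' := by rw [hA']; positivity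
  set D' := Real.sqrt (η' ^ 2 + 4 * η' * A') with hD'
  have hD'nn : 0 ≤ η' ^ 2 + 4 * η' * A' := by positivity
  have hD'2 : D' ^ 2 = η' ^ 2 + 4 * η' * A' := Real.sq_sqrt hD'nn
  have hD'0 : 0 ≤ D' := Real.sqrt_nonneg _
  have hD'η : η' ≤ D' := by
    rw [hD']
    have : η' = Real.sqrt (η' ^ 2) := by rw [Real.sqrt_sq hη'0.le]
    rw [this]
    exact Real.sqrt_le_sqrt (by nlinarith)
  have ha'η : η' ≤ a' := by rw [ha']; linarith
  have ha'0 : 0 < a' := lt_of_lt_of_le hη'0 ha'η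
  have ha'sq : a' ^ 2 = η' * (A' + a') := by
    rw [ha']; linear_combination (1/4 : ℝ) * hD'2
  -- key inequality: 2 s a' ≥ (s+1) γ a
  have hkey : (s + 1) * γ * a ≤ 2 * s * a' := by
    have h2a' : 2 * a' = γ * η + D' := by rw [ha', hη']; ring
    rcases le_or_gt ((s + 1) * γ * a) (s * γ * η) with h | h
    · -- trivial case
      have h3 := mul_le_mul_of_nonneg_left ha'η (by positivity : (0:ℝ) ≤ 2 * s)
      rw [hη'] at h3
      have h4 : 0 ≤ s * (γ * η) := by positivity
      nlinarith [h3, h4]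
    · -- main case: square comparison
      have hsq : ((s + 1) * γ * a - s * γ * η) ^ 2 ≤ (s * D') ^ 2 := by
        have hηA : η * A = a ^ 2 - η * a := by linear_combination -hasq
        have hP : 0 ≤ 4 * s ^ 2 - γ * (s + 1) ^ 2 := stmt12_aux s γ hs0 hs1 (by linarith)
        have h1 : 0 ≤ (a - η) * (4 * s ^ 2 - γ * (s + 1) ^ 2) :=
          mul_nonneg (by linarith) hP
        have h2 : 0 ≤ η * γ * (5 * s ^ 2 - 1) :=
          mul_nonneg (mul_nonneg hη.le hγ0.le) (by linarith)
        have hD'2' : D' ^ 2 = γ ^ 2 * η ^ 2 + 4 * γ * η * A + 4 * γ ^ 2 * η * a := by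
          rw [hD'2, hη', hA']; ring
        have hdiff : (s * D') ^ 2 - ((s + 1) * γ * a - s * γ * η) ^ 2
            = γ * a * ((a - η) * (4 * s ^ 2 - γ * (s + 1) ^ 2) + η * γ * (5 * s ^ 2 - 1)) := by
          linear_combination s ^ 2 * hD'2' + 4 * s ^ 2 * γ * hηA
        have hnn : (0:ℝ) ≤ γ * a * ((a - η) * (4 * s ^ 2 - γ * (s + 1) ^ 2)
            + η * γ * (5 * s ^ 2 - 1)) :=
          mul_nonneg (mul_nonneg hγ0.le ha0.le) (by linarith)
        linarith [hdiff, hnn]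
      have h0 : 0 ≤ (s + 1) * γ * a - s * γ * η := by linarith
      have hsD' : (s + 1) * γ * a - s * γ * η ≤ s * D' := by
        have := Real.sqrt_le_sqrt hsq
        rwa [Real.sqrt_sq h0, Real.sqrt_sq (mul_nonneg hs0.le hD'0)] at this
      have h5 : 2 * s * a' = s * (γ * η) + s * D' := by linear_combination s * h2a'
      linarith [hsD', h5]
  -- rewrite the ratios
  have hAa : 0 < A + a := by linarith
  have hA'a' : 0 < A' + a' := by linarith
  have h1 : a' / (A' + a') = γ * η / a' := by
    rw [div_eq_div_iff hA'a'.ne' ha'0.ne']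
    linear_combination ha'sq + (A' + a') * hη'
  have h2 : a / (A + a) = η / a := by
    rw [div_eq_div_iff hAa.ne' ha0.ne']
    linear_combination hasq
  rw [h1, h2]
  have h3 : 2 * s / (s + 1) * (η / a) = (2 * s * η) / ((s + 1) * a) := by
    field_simp
  rw [h3, div_le_div_iff₀ ha'0 (by positivity)]
  linarith [mul_le_mul_of_nonneg_left hkey hη.le]
end

section
/- Let β ∈ (1/5, 1), let (η_k)_{k≥0} and (η̂_k)_{k≥0} be sequences of positive reals, and let B ⊆ ℕ be a set of indices such that: η̂_k = η_k for k ∉ B; η̂_k ≤ β·η_k for k ∈ B; η_{k+1} = η̂_k/β for k ∉ B; and η_{k+1} = η̂_k for k ∈ B. Define A_0 = 0, a_k = (η_k + √(η_k² + 4 η_k A_k))/2, and A_{k+1} = A_k + a_k if k ∉ B, A_{k+1} = A_k + (η̂_k/η_k)·a_k if k ∈ B. Then for every N ≥ 1, Σ_{k=0}^{N−1} a_k/(A_k + a_k) ≤ ((1 + 2√β − β)/(√β − β))·(1 + log(A_N/A_1)). -/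
set_option maxHeartbeats 4000000

private lemma stmt13_aux1 (b w : ℝ) (hb447 : (0.447:ℝ) ≤ b) (hb1 : b < 1)
    (hw1 : 1 ≤ w) (hwle : w ^ 2 ≤ 2) :
    0 ≤ 2 * (1 + 2 * b - b ^ 2) * w - (1 - b) * (w + 1) * (b * w ^ 2 + 2) := by
  nlinarith [mul_nonneg (sub_nonneg.mpr hw1) (sub_nonneg.mpr hb447), sq_nonneg (w-1),
    mul_nonneg (mul_nonneg (sub_nonneg.mpr hw1) (sub_nonneg.mpr hw1)) (sub_nonneg.mpr hb447),
    mul_nonneg (sub_nonneg.mpr hw1) (sub_nonneg.mpr hb1.le),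
    mul_nonneg (sub_nonneg.mpr hw1) (sub_nonneg.mpr hwle)]

private lemma stmt13_aux2 (b : ℝ) (hb447 : (0.447:ℝ) ≤ b) (hb1 : b < 1) :
    0 ≤ 0.6931 * (1 + 2 * b - b ^ 2) - (1 - b ^ 2) := by
  nlinarith

private lemma stmt13_aux3 (b v : ℝ) (hb447 : (0.447:ℝ) ≤ b) (hb1 : b < 1)
    (hv1 : 1 ≤ v) (hv2 : b * v ^ 2 = b + 1) :
    4 * b * v ≤ 1 + 5 * b := by
  nlinarith [sq_nonneg (1 - 3 * b), sq_nonneg (1 + 5 * b - 4 * b * v), hv2,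
    mul_nonneg (mul_nonneg (by linarith : (0:ℝ) ≤ b) (by linarith : (0:ℝ) ≤ v)) (by linarith : (0:ℝ) ≤ 1 + 5 * b)]



/-- Logarithmic bound on the sum of the ratios `a_k/(A_k + a_k)` under the
coupled step-size and weight dynamics of the accelerated quasi-Newton proximal
extragradient method. -/
theorem stmt13
    (β : ℝ) (hβ0 : 1 / 5 < β) (hβ1 : β < 1)
    (η ηh : ℕ → ℝ) (hηpos : ∀ k, 0 < η k) (hηhpos : ∀ k, 0 < ηh k)
    (B : Set ℕ) [DecidablePred (· ∈ B)]
    (heq : ∀ k ∉ B, ηh k = η k) (hle : ∀ k ∈ B, ηh k ≤ β * η k)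
    (hnext1 : ∀ k ∉ B, η (k + 1) = ηh k / β)
    (hnext2 : ∀ k ∈ B, η (k + 1) = ηh k)
    (A a : ℕ → ℝ)
    (hA0 : A 0 = 0)
    (ha : ∀ k, a k = (η k + Real.sqrt ((η k) ^ 2 + 4 * η k * A k)) / 2)
    (hAn : ∀ k ∉ B, A (k + 1) = A k + a k)
    (hAb : ∀ k ∈ B, A (k + 1) = A k + (ηh k / η k) * a k)
    (N : ℕ) (hN : 1 ≤ N) :
    ∑ k ∈ Finset.range N, a k / (A k + a k)
      ≤ ((1 + 2 * Real.sqrt β - β) / (Real.sqrt β - β)) *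
          (1 + Real.log (A N / A 1)) := by
  have hβpos : (0:ℝ) < β := by linarith
  set b := Real.sqrt β with hbdef
  have hb0 : 0 < b := Real.sqrt_pos.mpr hβpos
  have hb2 : b ^ 2 = β := Real.sq_sqrt hβpos.le
  have hb1 : b < 1 := by nlinarith
  have hb447 : (0.447:ℝ) ≤ b := by nlinarith
  rw [show β = b ^ 2 from hb2.symm] at hle hnext1 ⊢
  have hC0 : (0:ℝ) < b - b ^ 2 := by nlinarith
  set Cst : ℝ := (1 + 2 * b - b ^ 2) / (b - b ^ 2) with hCdef
  have hCpos : 0 < Cst := div_pos (by nlinarith) hC0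
  -- basic facts about a and A
  have hann : ∀ k, 0 ≤ A k → η k ≤ a k := by
    intro k hk
    rw [ha k]
    have h1 : η k ≤ Real.sqrt ((η k) ^ 2 + 4 * η k * A k) := by
      have h2 := Real.sqrt_le_sqrt (show (η k) ^ 2 ≤ (η k) ^ 2 + 4 * η k * A k by
        nlinarith [hηpos k])
      rwa [Real.sqrt_sq (hηpos k).le] at h2
    linarith
  have hAnonneg : ∀ k, 0 ≤ A k := by
    intro k
    induction k with
    | zero => rw [hA0]
    | succ n ih =>
      by_cases hn : n ∈ B
      · rw [hAb n hn]
        have h1 : 0 ≤ (ηh n / η n) * a n :=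
          mul_nonneg (div_nonneg (hηhpos n).le (hηpos n).le)
            (le_trans (hηpos n).le (hann n ih))
        linarith
      · rw [hAn n hn]
        have := hann n ih
        have := hηpos n
        linarith
  have hapos : ∀ k, 0 < a k := fun k => lt_of_lt_of_le (hηpos k) (hann k (hAnonneg k))
  have haη : ∀ k, η k ≤ a k := fun k => hann k (hAnonneg k)
  have hsq : ∀ k, a k ^ 2 = η k * (A k + a k) := by
    intro k
    have hD : (0:ℝ) ≤ (η k) ^ 2 + 4 * η k * A k := by nlinarith [hηpos k, hAnonneg k]
    have hs := Real.sq_sqrt hD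
    rw [ha k]
    linear_combination hs / 4
  have ha2 : ∀ k, η k * A k ≤ a k ^ 2 := by
    intro k
    have := hsq k
    nlinarith [hapos k, hηpos k]
  have hAa : ∀ k, 0 < A k + a k := fun k => by
    have := hAnonneg k; have := hapos k; linarith
  have hr : ∀ k, a k / (A k + a k) = η k / a k := by
    intro k
    rw [div_eq_div_iff (hAa k).ne' (hapos k).ne']
    nlinarith [hsq k]
  have hAmono : ∀ k, A k ≤ A (k + 1) := by
    intro k
    by_cases hk : k ∈ B
    · rw [hAb k hk]
      have : 0 ≤ (ηh k / η k) * a k :=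
        mul_nonneg (div_nonneg (hηhpos k).le (hηpos k).le) (hapos k).le
      linarith
    · rw [hAn k hk]; linarith [hapos k]
  have hAm : Monotone A := monotone_nat_of_le_succ hAmono
  have ha0 : a 0 = η 0 := by
    rw [ha 0, hA0]
    rw [show (η 0) ^ 2 + 4 * η 0 * 0 = (η 0) ^ 2 by ring, Real.sqrt_sq (hηpos 0).le]
    ring
  have hA1 : A 1 = ηh 0 := by
    by_cases h0 : 0 ∈ B
    · rw [hAb 0 h0, hA0, ha0, zero_add, div_mul_cancel₀ _ (hηpos 0).ne']
    · rw [hAn 0 h0, hA0, ha0, heq 0 h0]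
      ring
  have hApos : ∀ k, 1 ≤ k → 0 < A k := by
    intro k hk
    calc (0:ℝ) < ηh 0 := hηhpos 0
    _ = A 1 := hA1.symm
    _ ≤ A k := hAm hk
  -- potential
  set t : ℕ → ℝ := fun k => Real.sqrt (η k / A k) with htdef
  have h1b : (0:ℝ) < 1 - b := by linarith
  set γ : ℝ := 2 / (1 - b) with hγdef
  have hγpos : 0 < γ := div_pos two_pos h1b
  set φ : ℕ → ℝ := fun k => γ * Real.log (1 + t k) with hφdef
  have ht0 : ∀ k, 0 ≤ t k := fun k => Real.sqrt_nonneg _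
  have hφ0 : ∀ k, 0 ≤ φ k := fun k =>
    mul_nonneg hγpos.le (Real.log_nonneg (by linarith [ht0 k]))
  have ht2 : ∀ k, t k ^ 2 = η k / A k := fun k =>
    Real.sq_sqrt (div_nonneg (hηpos k).le (hAnonneg k))
  have hlog1 : ∀ x : ℝ, 0 < x → 1 - 1 / x ≤ Real.log x := by
    intro x hx
    have h := Real.log_le_sub_one_of_pos (show (0:ℝ) < 1 / x by positivity)
    rw [one_div, Real.log_inv] at h
    have : (x:ℝ)⁻¹ = 1 / x := (one_div x).symm
    linarith [this ▸ h]
  -- key per-step inequality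
  have key : ∀ k, 1 ≤ k → a k / (A k + a k) ≤
      Cst * (Real.log (A (k + 1)) - Real.log (A k)) + (φ k - φ (k + 1)) := by
    intro k hk
    have hP : 0 < A k := hApos k hk
    have hQ : 0 < A (k + 1) := hApos (k + 1) (by omega)
    have hPQ : A k ≤ A (k + 1) := hAmono k
    have htk2 : t k ^ 2 = η k / A k := ht2 k
    have htk2' : t k ^ 2 * A k = η k := by
      rw [htk2, div_mul_cancel₀ _ hP.ne']
    have htkpos : 0 < t k := Real.sqrt_pos.mpr (div_pos (hηpos k) hP)
    have h1tk : (0:ℝ) < 1 + t k := by linarith [ht0 k]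
    have h1tk1 : (0:ℝ) < 1 + t (k + 1) := by linarith [ht0 (k + 1)]
    have hrt : a k / (A k + a k) ≤ t k := by
      rw [hr k, div_le_iff₀ (hapos k)]
      have h8 : η k * (t k ^ 2 * A k) = η k * η k := by rw [htk2']
      have h9 : t k ^ 2 * (η k * A k) ≤ t k ^ 2 * a k ^ 2 :=
        mul_le_mul_of_nonneg_left (ha2 k) (sq_nonneg (t k))
      have h10 : η k ^ 2 ≤ (t k * a k) ^ 2 := by nlinarith [h8, h9]
      have h11 := Real.sqrt_le_sqrt h10
      rwa [Real.sqrt_sq (hηpos k).le,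
        Real.sqrt_sq (mul_nonneg (ht0 k) (hapos k).le)] at h11
    have hr1 : a k / (A k + a k) ≤ 1 := by
      rw [div_le_one (hAa k)]; linarith [hAnonneg k]
    by_cases hkB : k ∈ B
    · -- backtracking step
      have ht'2 : t (k + 1) ≤ b * t k := by
        have h1 : η (k + 1) / A (k + 1) ≤ b ^ 2 * (η k / A k) := by
          rw [hnext2 k hkB]
          calc ηh k / A (k + 1) ≤ b ^ 2 * η k / A k :=
                div_le_div₀ (mul_nonneg (sq_nonneg b) (hηpos k).le) (hle k hkB) hP hPQ
          _ = b ^ 2 * (η k / A k) := by ring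
        have h2 := Real.sqrt_le_sqrt h1
        have h3 : Real.sqrt (b ^ 2 * (η k / A k)) = b * t k := by
          rw [Real.sqrt_mul (sq_nonneg b), Real.sqrt_sq hb0.le]
        simp only [htdef]
        rw [← h3]
        exact h2
      have hkey1 : 2 * t k / (1 + t k) ≤ φ k - φ (k + 1) := by
        have hbt : (0:ℝ) < 1 + b * t k := by nlinarith [mul_nonneg hb0.le (ht0 k)]
        have hlogm : Real.log (1 + t (k + 1)) ≤ Real.log (1 + b * t k) :=
          Real.log_le_log h1tk1 (by linarith)
        have hx : (0:ℝ) < (1 + t k) / (1 + b * t k) := div_pos h1tk hbt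
        have h2 := hlog1 _ hx
        rw [Real.log_div h1tk.ne' hbt.ne'] at h2
        have h3 : 1 - 1 / ((1 + t k) / (1 + b * t k)) = (1 - b) * t k / (1 + t k) := by
          rw [one_div_div]
          field_simp
          ring
        rw [h3] at h2
        have h4 : γ * ((1 - b) * t k / (1 + t k)) = 2 * t k / (1 + t k) := by
          rw [hγdef]; field_simp
        have h5 : γ * ((1 - b) * t k / (1 + t k)) ≤
            γ * (Real.log (1 + t k) - Real.log (1 + b * t k)) :=
          mul_le_mul_of_nonneg_left h2 hγpos.le
        have h6 : γ * Real.log (1 + t (k + 1)) ≤ γ * Real.log (1 + b * t k) :=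
          mul_le_mul_of_nonneg_left hlogm hγpos.le
        simp only [hφdef]
        linarith [h5, h6, h4]
      have hlogQP : 0 ≤ Real.log (A (k + 1)) - Real.log (A k) := by
        have := Real.log_le_log hP hPQ; linarith
      have hmin : a k / (A k + a k) ≤ 2 * t k / (1 + t k) := by
        rcases le_or_gt (t k) 1 with h | h
        · have h7 : t k ≤ 2 * t k / (1 + t k) := by
            rw [le_div_iff₀ h1tk]; nlinarith
          linarith
        · have h7 : (1:ℝ) ≤ 2 * t k / (1 + t k) := by
            rw [le_div_iff₀ h1tk]; nlinarith
          linarith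
      linarith [mul_nonneg hCpos.le hlogQP, hmin, hkey1]
    · -- non-backtracking step
      have hQeq : A (k + 1) = A k + a k := hAn k hkB
      have hηk1 : η (k + 1) = η k / b ^ 2 := by
        rw [hnext1 k hkB, heq k hkB]
      have hatP : A k * t k ≤ a k := by
        have h8 : (A k * t k) ^ 2 ≤ a k ^ 2 := by
          have h9 : A k * (t k ^ 2 * A k) = A k * η k := by rw [htk2']
          nlinarith [ha2 k, hP]
        have h11 := Real.sqrt_le_sqrt h8
        rwa [Real.sqrt_sq (mul_nonneg hP.le (ht0 k)),
          Real.sqrt_sq (hapos k).le] at h11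
      have hlogt : Real.log (A k) + Real.log (1 + t k) ≤ Real.log (A (k + 1)) := by
        have h1 : A k * (1 + t k) ≤ A (k + 1) := by
          rw [hQeq]; nlinarith [hatP]
        calc Real.log (A k) + Real.log (1 + t k)
            = Real.log (A k * (1 + t k)) := (Real.log_mul hP.ne' h1tk.ne').symm
        _ ≤ Real.log (A (k + 1)) := Real.log_le_log (by nlinarith [hP, h1tk]) h1
      have hbne : b ≠ 0 := hb0.ne'
      have hAkne : A k ≠ 0 := hP.ne'
      have hinvb : (0:ℝ) < 1 / b := by
        rw [one_div]; exact inv_pos.mpr hb0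
      have ht'le : t (k + 1) ≤ t k / b := by
        have h1 : η (k + 1) / A (k + 1) ≤ (η k / A k) * (1 / b) ^ 2 := by
          have h2 : η k / b ^ 2 / A (k + 1) ≤ η k / b ^ 2 / A k := by
            apply div_le_div_of_nonneg_left (div_nonneg (hηpos k).le (sq_nonneg b)) hP hPQ
          have h3 : η k / b ^ 2 / A k = (η k / A k) * (1 / b) ^ 2 := by
            ring
          rw [hηk1]
          linarith
        have h2 := Real.sqrt_le_sqrt h1
        have h3 : Real.sqrt ((η k / A k) * (1 / b) ^ 2) = t k * (1 / b) := by
          rw [Real.sqrt_mul (div_nonneg (hηpos k).le hP.le), Real.sqrt_sq hinvb.le]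
        simp only [htdef]
        calc Real.sqrt (η (k + 1) / A (k + 1)) ≤ Real.sqrt ((η k / A k) * (1 / b) ^ 2) := h2
        _ = Real.sqrt (η k / A k) * (1 / b) := h3
        _ = Real.sqrt (η k / A k) / b := by ring
      have ht'le2 : t (k + 1) ≤ 1 / b := by
        have h1 : η (k + 1) / A (k + 1) ≤ (1 / b) ^ 2 := by
          rw [hηk1, hQeq]
          have h2 : η k ≤ A k + a k := by linarith [haη k, hAnonneg k]
          have h3 : η k / b ^ 2 / (A k + a k) ≤ η k / b ^ 2 / η k := by
            apply div_le_div_of_nonneg_left (div_nonneg (hηpos k).le (sq_nonneg b)) (hηpos k) h2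
          have hηne : η k ≠ 0 := (hηpos k).ne'
          have h4 : η k / b ^ 2 / η k = (1 / b) ^ 2 := by
            rw [div_div, mul_comm, ← div_div, div_self hηne, div_pow, one_pow]
          linarith
        have h2 := Real.sqrt_le_sqrt h1
        rwa [Real.sqrt_sq hinvb.le] at h2
      rcases le_or_gt (t k) 1 with hts | hts
      · -- small t
        have hlog2 : Real.log (1 + t (k + 1)) - Real.log (1 + t k) ≤
            (1 - b) * t k / (b * (1 + t k)) := by
          have h1 : Real.log (1 + t (k + 1)) ≤ Real.log (1 + t k / b) :=
            Real.log_le_log h1tk1 (by linarith)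
          have h2 : Real.log (1 + t k / b) - Real.log (1 + t k) =
              Real.log ((1 + t k / b) / (1 + t k)) :=
            (Real.log_div (by nlinarith [ht0 k, hinvb, mul_nonneg (ht0 k) hinvb.le] : ((1:ℝ) + t k / b) ≠ 0) h1tk.ne').symm
          have htb0 : (0:ℝ) < 1 + t k / b := by
            have := mul_nonneg (ht0 k) hinvb.le
            have htb : t k / b = t k * (1 / b) := by ring
            nlinarith
          have h3 : Real.log ((1 + t k / b) / (1 + t k)) ≤ (1 + t k / b) / (1 + t k) - 1 :=
            Real.log_le_sub_one_of_pos (div_pos htb0 h1tk)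
          have h4 : (1 + t k / b) / (1 + t k) - 1 = (1 - b) * t k / (b * (1 + t k)) := by
            field_simp
            ring
          linarith
        set w := Real.sqrt (1 + t k) with hwdef
        have hw2 : w ^ 2 = 1 + t k := Real.sq_sqrt (by linarith [ht0 k])
        have hwnn : 0 ≤ w := Real.sqrt_nonneg _
        have hw1 : 1 ≤ w := by nlinarith [hw2, hwnn, ht0 k]
        have hwle : w ^ 2 ≤ 2 := by rw [hw2]; linarith
        have hwne : w ≠ 0 := by
          intro h0; rw [h0] at hw1; linarith
        have hlogw : 2 - 2 / w ≤ Real.log (1 + t k) := by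
          have h1 := hlog1 w (by linarith)
          have h2 : Real.log w = Real.log (1 + t k) / 2 := by
            rw [hwdef, Real.log_sqrt (by linarith [ht0 k])]
          rw [h2] at h1
          have h9 : 2 - 2 / w = 2 * (1 - 1 / w) := by ring
          rw [h9]
          linarith
        have hN0 : 0 ≤ 2 * (1 + 2 * b - b ^ 2) * w - (1 - b) * (w + 1) * (b * w ^ 2 + 2) := by
          exact stmt13_aux1 b w hb447 hb1 hw1 hwle
        have hpoly : t k + γ * ((1 - b) * t k / (b * (1 + t k))) ≤ Cst * (2 - 2 / w) := by
          rw [← sub_nonneg]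
          have htw : t k = w ^ 2 - 1 := by linarith
          have h1tw : 1 + t k = w ^ 2 := by linarith
          have hrew : Cst * (2 - 2 / w) - (t k + γ * ((1 - b) * t k / (b * (1 + t k)))) =
              ((w - 1) * (2 * (1 + 2 * b - b ^ 2) * w - (1 - b) * (w + 1) * (b * w ^ 2 + 2))) /
                ((b - b ^ 2) * w ^ 2) := by
            rw [h1tw, htw, hCdef, hγdef]
            field_simp
            ring
          rw [hrew]
          apply div_nonneg
          · exact mul_nonneg (by linarith) hN0
          · positivity
        have hφdiff : -(γ * ((1 - b) * t k / (b * (1 + t k)))) ≤ φ k - φ (k + 1) := by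
          have h := mul_le_mul_of_nonneg_left hlog2 hγpos.le
          simp only [hφdef]
          have hexp : γ * (Real.log (1 + t (k + 1)) - Real.log (1 + t k)) =
              γ * Real.log (1 + t (k + 1)) - γ * Real.log (1 + t k) := by ring
          linarith [hexp ▸ h]
        have hCl : Cst * Real.log (1 + t k) ≤
            Cst * (Real.log (A (k + 1)) - Real.log (A k)) :=
          mul_le_mul_of_nonneg_left (by linarith) hCpos.le
        have hCw : Cst * (2 - 2 / w) ≤ Cst * Real.log (1 + t k) :=
          mul_le_mul_of_nonneg_left hlogw hCpos.le
        linarith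
      · -- large t
        have hηA : A k ≤ η k := by
          have h9 : 0 ≤ (t k ^ 2 - 1) * A k :=
            mul_nonneg (by nlinarith [hts, htkpos]) hP.le
          nlinarith [htk2', h9]
        have hlogQ2 : Real.log (A k) + Real.log 2 ≤ Real.log (A (k + 1)) := by
          have h1 : 2 * A k ≤ A (k + 1) := by
            rw [hQeq]; linarith [haη k]
          calc Real.log (A k) + Real.log 2 = Real.log (2 * A k) := by
                rw [Real.log_mul two_ne_zero hP.ne']; ring
          _ ≤ Real.log (A (k + 1)) := Real.log_le_log (by linarith) h1
        have hφk : γ * Real.log 2 ≤ φ k := by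
          apply mul_le_mul_of_nonneg_left _ hγpos.le
          apply Real.log_le_log two_pos
          linarith
        have hφk1 : φ (k + 1) ≤ γ * Real.log (1 + 1 / b) := by
          apply mul_le_mul_of_nonneg_left _ hγpos.le
          apply Real.log_le_log h1tk1
          linarith [ht'le2]
        have hlog1b : Real.log (1 + 1 / b) - Real.log 2 ≤ (1 - b) / (2 * b) := by
          have h3 : Real.log ((1 + 1 / b) / 2) ≤ (1 + 1 / b) / 2 - 1 :=
            Real.log_le_sub_one_of_pos (by linarith)
          rw [Real.log_div (by linarith : ((1:ℝ) + 1 / b) ≠ 0) two_ne_zero] at h3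
          have h4 : (1 + 1 / b) / 2 - 1 = (1 - b) / (2 * b) := by
            field_simp
            ring
          linarith
        have hγb : γ * ((1 - b) / (2 * b)) = 1 / b := by
          rw [hγdef]
          first
          | (field_simp; ring)
          | field_simp
        have h5 : γ * Real.log (1 + 1 / b) - γ * Real.log 2 ≤ 1 / b := by
          have h6 := mul_le_mul_of_nonneg_left hlog1b hγpos.le
          have hexp : γ * (Real.log (1 + 1 / b) - Real.log 2) =
              γ * Real.log (1 + 1 / b) - γ * Real.log 2 := by ring
          linarith [hexp ▸ h6, hγb]
        have hnum : 1 + 1 / b ≤ Cst * Real.log 2 := by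
          have hl2 : (0.6931:ℝ) ≤ Real.log 2 := by
            have := Real.log_two_gt_d9; norm_num at this ⊢; linarith
          have h1 : 1 + 1 / b ≤ Cst * 0.6931 := by
            rw [← sub_nonneg]
            have h2 : Cst * 0.6931 - (1 + 1 / b) =
                (0.6931 * (1 + 2 * b - b ^ 2) - (1 - b ^ 2)) / (b - b ^ 2) := by
              rw [hCdef]; field_simp; ring
            rw [h2]
            apply div_nonneg _ hC0.le
            exact stmt13_aux2 b hb447 hb1
          linarith [mul_le_mul_of_nonneg_left hl2 hCpos.le, h1]
        have hCl2 : Cst * Real.log 2 ≤ Cst * (Real.log (A (k + 1)) - Real.log (A k)) :=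
          mul_le_mul_of_nonneg_left (by linarith) hCpos.le
        have hφexp : φ k - φ (k + 1) ≥ -(1 / b) := by
          simp only [hφdef] at hφk hφk1 ⊢
          linarith
        linarith
  -- t 1 is at most 1/b
  have hA1pos : 0 < A 1 := hApos 1 le_rfl
  have hinvb : (0:ℝ) < 1 / b := by
    rw [one_div]; exact inv_pos.mpr hb0
  have ht1 : t 1 ≤ 1 / b := by
    have h1 : η 1 / A 1 ≤ (1 / b) ^ 2 := by
      by_cases h0 : 0 ∈ B
      · rw [hA1, hnext2 0 h0, div_self (hηhpos 0).ne']
        rw [div_pow, one_pow, le_div_iff₀ (by nlinarith [sq_nonneg b, hb0] : (0:ℝ) < b ^ 2)]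
        nlinarith [hb0, hb1]
      · rw [hA1, hnext1 0 h0, heq 0 h0]
        rw [div_div, mul_comm, ← div_div, div_self (hηpos 0).ne', div_pow, one_pow]
    have h2 := Real.sqrt_le_sqrt h1
    rwa [Real.sqrt_sq hinvb.le] at h2
  -- 1 + φ 1 ≤ Cst
  have hφ1C : 1 + φ 1 ≤ Cst := by
    set v := Real.sqrt (1 + 1 / b) with hvdef
    have hv2 : v ^ 2 = 1 + 1 / b := Real.sq_sqrt (by linarith)
    have hvnn : 0 ≤ v := Real.sqrt_nonneg _
    have hv1 : 1 ≤ v := by nlinarith [hv2, hvnn, hinvb]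
    have hv2b : b * v ^ 2 = b + 1 := by
      rw [hv2]; field_simp
    have hlg : Real.log (1 + t 1) ≤ 2 * v - 2 := by
      have h1 : Real.log (1 + t 1) ≤ Real.log (1 + 1 / b) :=
        Real.log_le_log (by linarith [ht0 1]) (by linarith)
      have h2 : Real.log (1 + 1 / b) = 2 * Real.log v := by
        rw [← hv2, Real.log_pow]
        push_cast
        ring
      have h3 : Real.log v ≤ v - 1 := Real.log_le_sub_one_of_pos (by linarith)
      linarith
    have h4bv : 4 * b * v ≤ 1 + 5 * b := stmt13_aux3 b v hb447 hb1 hv1 hv2b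
    have hfinal : 1 + γ * (2 * v - 2) ≤ Cst := by
      rw [← sub_nonneg]
      have hrew : Cst - (1 + γ * (2 * v - 2)) =
          (1 + 5 * b - 4 * b * v) / (b - b ^ 2) := by
        rw [hCdef, hγdef]
        field_simp
        ring
      rw [hrew]
      exact div_nonneg (by linarith) hC0.le
    have h5 : φ 1 ≤ γ * (2 * v - 2) := by
      simp only [hφdef]
      exact mul_le_mul_of_nonneg_left hlg hγpos.le
    linarith
  -- summation by induction
  have main : ∀ n, 1 ≤ n → ∑ k ∈ Finset.range n, a k / (A k + a k) ≤
      1 + Cst * (Real.log (A n) - Real.log (A 1)) + (φ 1 - φ n) := by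
    intro n hn
    induction n with
    | zero => omega
    | succ m ih =>
      rcases Nat.lt_or_ge m 1 with hm | hm
      · have hm0 : m = 0 := by omega
        subst hm0
        rw [Finset.sum_range_one, hA0, zero_add, div_self (hapos 0).ne']
        simp
      · have hih := ih hm
        rw [Finset.sum_range_succ]
        have hk := key m hm
        linarith
  have hMain := main N hN
  have hlogdiv : Real.log (A N / A 1) = Real.log (A N) - Real.log (A 1) :=
    Real.log_div (hApos N hN).ne' hA1pos.ne'
  rw [hlogdiv]
  have hφN := hφ0 N
  have hdist : Cst * (1 + (Real.log (A N) - Real.log (A 1))) =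
      Cst + Cst * (Real.log (A N) - Real.log (A 1)) := by ring
  linarith [hMain, hφ1C, hφN, hdist]
end

section
/- Let E be a real inner product space, R > 0, ρ > 0, w ∈ E with ‖w‖ ≤ R, and g̃ ∈ E. Define w⁺ = (R / max{‖w − ρg̃‖, R})·(w − ρg̃), the Euclidean projection of w − ρg̃ onto the closed ball of radius R centered at 0. Then for every x ∈ E with ‖x‖ ≤ R: ⟨g̃, w − x⟩ ≤ (1/(2ρ))‖w − x‖² − (1/(2ρ))‖w⁺ − x‖² + (ρ/2)‖g̃‖². -/
open scoped RealInnerProductSpace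

/-- Per-step inequality of projected online gradient descent on the
closed ball of radius `R`, with step size `ρ` and linear loss gradient `g`. -/
theorem stmt15
    {E : Type*} [NormedAddCommGroup E] [InnerProductSpace ℝ E]
    (R ρ : ℝ) (hR : 0 < R) (hρ : 0 < ρ)
    (w g : E) (hw : ‖w‖ ≤ R)
    (wplus : E) (hwplus : wplus = (R / max ‖w - ρ • g‖ R) • (w - ρ • g)) :
    ∀ x : E, ‖x‖ ≤ R →
      ⟪g, w - x⟫ ≤ (1 / (2 * ρ)) * ‖w - x‖ ^ 2 - (1 / (2 * ρ)) * ‖wplus - x‖ ^ 2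
        + (ρ / 2) * ‖g‖ ^ 2 := by
  intro x hx
  set y := w - ρ • g with hy
  set m := max ‖y‖ R with hm
  have hmpos : 0 < m := lt_of_lt_of_le hR (le_max_right _ _)
  set c := R / m with hc
  have hc0 : 0 < c := div_pos hR hmpos
  have hc1 : c ≤ 1 := by
    rw [hc, div_le_one hmpos]; exact le_max_right _ _
  have h1 : ‖wplus - x‖ ^ 2 = c ^ 2 * ‖y‖ ^ 2 - 2 * (c * ⟪y, x⟫) + ‖x‖ ^ 2 := by
    rw [hwplus, @norm_sub_sq_real, norm_smul, real_inner_smul_left,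
      Real.norm_eq_abs, abs_of_pos hc0]
    ring
  have h2 : ‖y - x‖ ^ 2 = ‖y‖ ^ 2 - 2 * ⟪y, x⟫ + ‖x‖ ^ 2 := by
    rw [@norm_sub_sq_real]
  have hxy : ⟪y, x⟫ ≤ ‖y‖ * R := by
    have h := real_inner_le_norm y x
    nlinarith [norm_nonneg y]
  have hkey : ‖wplus - x‖ ^ 2 ≤ ‖y - x‖ ^ 2 := by
    rcases le_or_gt ‖y‖ R with h | h
    · have : c = 1 := by rw [hc, hm, max_eq_right h, div_self hR.ne']
      rw [h1, h2, this]; linarith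
    · have hcy : c * ‖y‖ = R := by
        rw [hc, hm, max_eq_left h.le]
        exact div_mul_cancel₀ R (by linarith : ‖y‖ ≠ 0)
      rw [h1, h2]
      nlinarith [norm_nonneg y, sq_nonneg (1 - c)]
  have h3 : ‖y - x‖ ^ 2 = ‖w - x‖ ^ 2 - 2 * ρ * ⟪g, w - x⟫ + ρ ^ 2 * ‖g‖ ^ 2 := by
    have hyx : y - x = (w - x) - ρ • g := by rw [hy]; abel
    rw [hyx, @norm_sub_sq_real, real_inner_smul_right, norm_smul, Real.norm_eq_abs,
      abs_of_pos hρ, real_inner_comm]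
    ring
  have h2ρ : (0:ℝ) < 2 * ρ := by linarith
  rw [← sub_nonneg]
  have : (1 / (2 * ρ)) * ‖w - x‖ ^ 2 - (1 / (2 * ρ)) * ‖wplus - x‖ ^ 2
      + (ρ / 2) * ‖g‖ ^ 2 - ⟪g, w - x⟫
      = (‖y - x‖ ^ 2 - ‖wplus - x‖ ^ 2) / (2 * ρ) := by
    field_simp
    nlinarith [h3]
  rw [this]
  exact div_nonneg (by linarith) h2ρ.le
end

section
/- Let W be a real symmetric d×d matrix with largest eigenvalue λ₁ and smallest eigenvalue λ_d. Suppose u and v are unit vectors in ℝ^d satisfying ⟨Wu, u⟩ ≥ λ₁ − (1/4)(λ₁ − λ_d) and ⟨Wv, v⟩ ≤ λ_d + (1/4)(λ₁ − λ_d). Set λ̂₁ = ⟨Wu, u⟩, λ̂_d = ⟨Wv, v⟩, and λ̂ = max{λ̂₁, −λ̂_d}. Then λ₁ ≤ λ̂₁ + (1/2)(λ̂₁ − λ̂_d), λ_d ≥ λ̂_d − (1/2)(λ̂₁ − λ̂_d), and ‖W‖_op ≤ 2λ̂. -/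
/-!
Expanding in an orthonormal eigenbasis gives `λ_d ‖x‖² ≤ ⟪W x, x⟫ ≤ λ₁ ‖x‖²`, and since the norm
of a symmetric operator is the supremum of `|⟪T x, x⟫|` over the unit sphere,
`‖W‖ ≤ max λ₁ (-λ_d)`. The accuracy hypotheses give `λ̂₁ - λ̂_d ≥ (λ₁ - λ_d) / 2`, from which the
two eigenvalue bounds, and then `max λ₁ (-λ_d) ≤ 2 λ̂`, are linear arithmetic.
-/

open scoped RealInnerProductSpace

noncomputable section

theorem ContinuousLinearMap.norm_le_of_abs_re_inner_apply_self_le {𝕜 E : Type*} [RCLike 𝕜]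
    [NormedAddCommGroup E] [InnerProductSpace 𝕜 E] {T : E →L[𝕜] E} (hT : T.IsSymmetric)
    {M : ℝ} (hM : 0 ≤ M) (h : ∀ x, |RCLike.re (inner 𝕜 (T x) x)| ≤ M * ‖x‖ ^ 2) :
    ‖T‖ ≤ M := by
  rw [T.norm_eq_iSup_rayleighQuotient hT]
  refine Real.iSup_le (fun x ↦ ?_) hM
  rcases eq_or_ne x 0 with rfl | hx
  · simpa using hM
  rw [rayleighQuotient, reApplyInnerSelf_apply, abs_div, abs_sq,
    div_le_iff₀ (by positivity)]
  exact h x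

namespace LinearMap.IsSymmetric

variable {ι E : Type*} [Fintype ι] [NormedAddCommGroup E] [InnerProductSpace ℝ E]
  {T : E →ₗ[ℝ] E} {μ : ι → ℝ}

theorem inner_apply_self_eq_sum (hT : T.IsSymmetric) (b : OrthonormalBasis ι ℝ E)
    (hb : ∀ i, T (b i) = μ i • b i) (x : E) : ⟪T x, x⟫ = ∑ i, μ i * ⟪b i, x⟫ ^ 2 := by
  rw [← b.sum_inner_mul_inner]
  refine Finset.sum_congr rfl fun i _ ↦ ?_
  rw [hT, hb, real_inner_smul_right, real_inner_comm x]
  ring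

theorem mul_norm_sq_le_inner_apply_self (hT : T.IsSymmetric) (b : OrthonormalBasis ι ℝ E)
    (hb : ∀ i, T (b i) = μ i • b i) {a : ℝ} (ha : ∀ i, a ≤ μ i) (x : E) :
    a * ‖x‖ ^ 2 ≤ ⟪T x, x⟫ := by
  rw [hT.inner_apply_self_eq_sum b hb, ← b.sum_sq_inner_right, Finset.mul_sum]
  gcongr with i
  exact ha i

theorem inner_apply_self_le_mul_norm_sq (hT : T.IsSymmetric) (b : OrthonormalBasis ι ℝ E)
    (hb : ∀ i, T (b i) = μ i • b i) {c : ℝ} (hc : ∀ i, μ i ≤ c) (x : E) :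
    ⟪T x, x⟫ ≤ c * ‖x‖ ^ 2 := by
  rw [hT.inner_apply_self_eq_sum b hb, ← b.sum_sq_inner_right, Finset.mul_sum]
  gcongr with i
  exact hc i

end LinearMap.IsSymmetric

theorem isSymmetric_matCLM {d : ℕ} {W : Matrix (Fin d) (Fin d) ℝ} (hW : W.IsHermitian) :
    (matCLM W).IsSymmetric := by
  rw [matCLM, Matrix.coe_toEuclideanCLM_eq_toEuclideanLin]
  exact Matrix.isSymmetric_toEuclideanLin_iff.mpr hW

theorem matCLM_eigenvectorBasis {d : ℕ} {W : Matrix (Fin d) (Fin d) ℝ} (hW : W.IsHermitian)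
    (j : Fin d) : matCLM W (hW.eigenvectorBasis j) = hW.eigenvalues j • hW.eigenvectorBasis j :=
  WithLp.ofLp_injective 2 <| by
    simpa [matCLM, Matrix.ofLp_toEuclideanCLM] using hW.mulVec_eigenvectorBasis j

theorem stmt16_general {d : ℕ}
    (W : Matrix (Fin d) (Fin d) ℝ) (hW : W.IsHermitian)
    (lam1 lamd : ℝ)
    (hlam1ub : ∀ i, hW.eigenvalues i ≤ lam1)
    (hlamdlb : ∀ i, lamd ≤ hW.eigenvalues i)
    (u v : EuclideanSpace ℝ (Fin d)) (hu : ‖u‖ = 1)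
    (h1 : lam1 - (1 / 4) * (lam1 - lamd) ≤ ⟪matCLM W u, u⟫)
    (h2 : ⟪matCLM W v, v⟫ ≤ lamd + (1 / 4) * (lam1 - lamd))
    (l1 ld lhat : ℝ)
    (hl1 : l1 = ⟪matCLM W u, u⟫) (hld : ld = ⟪matCLM W v, v⟫)
    (hlhat : lhat = max l1 (-ld)) :
    lam1 ≤ l1 + (1 / 2) * (l1 - ld)
      ∧ ld - (1 / 2) * (l1 - ld) ≤ lamd
      ∧ ‖matCLM W‖ ≤ 2 * lhat := by
  have hT := isSymmetric_matCLM hW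
  have heig := matCLM_eigenvectorBasis hW
  have hlower : ∀ x, lamd * ‖x‖ ^ 2 ≤ ⟪matCLM W x, x⟫ :=
    hT.mul_norm_sq_le_inner_apply_self _ heig hlamdlb
  have hupper : ∀ x, ⟪matCLM W x, x⟫ ≤ lam1 * ‖x‖ ^ 2 :=
    hT.inner_apply_self_le_mul_norm_sq _ heig hlam1ub
  have hlamd_le_lam1 : lamd ≤ lam1 := by
    simpa [hu] using (hlower u).trans (hupper u)
  have hlam1 : lam1 ≤ l1 + (1 / 2) * (l1 - ld) := by linarith
  have hlamd : ld - (1 / 2) * (l1 - ld) ≤ lamd := by linarith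
  refine ⟨hlam1, hlamd, ?_⟩
  have hlam1_le : lam1 ≤ max lam1 (-lamd) := le_max_left _ _
  have hlamd_le : -lamd ≤ max lam1 (-lamd) := le_max_right _ _
  have hquad : ∀ x, |⟪matCLM W x, x⟫| ≤ max lam1 (-lamd) * ‖x‖ ^ 2 := by
    intro x
    have hx := sq_nonneg ‖x‖
    refine abs_le.mpr ⟨?_, ?_⟩
    · nlinarith [hlower x]
    · nlinarith [hupper x]
  have hl1_le : l1 ≤ lhat := hlhat ▸ le_max_left _ _
  have hld_le : -ld ≤ lhat := hlhat ▸ le_max_right _ _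
  calc ‖matCLM W‖ ≤ max lam1 (-lamd) :=
        (matCLM W).norm_le_of_abs_re_inner_apply_self_le hT (by linarith) hquad
    _ ≤ 2 * lhat := max_le (by linarith) (by linarith)

/-- Core estimate in the correctness proof of the approximate separation
oracle: approximate extreme Rayleigh quotients with relative accuracy `1/4` sandwich the
extreme eigenvalues of the symmetric matrix `W`, and bound its operator norm by `2λ̂`. -/
theorem stmt16 {d : ℕ}
    (W : Matrix (Fin d) (Fin d) ℝ) (hW : W.IsHermitian)
    (lam1 lamd : ℝ)
    (hlam1ub : ∀ i, hW.eigenvalues i ≤ lam1) (hlam1mem : ∃ i, hW.eigenvalues i = lam1)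
    (hlamdlb : ∀ i, lamd ≤ hW.eigenvalues i) (hlamdmem : ∃ i, hW.eigenvalues i = lamd)
    (u v : EuclideanSpace ℝ (Fin d)) (hu : ‖u‖ = 1) (hv : ‖v‖ = 1)
    (h1 : lam1 - (1 / 4) * (lam1 - lamd) ≤ ⟪matCLM W u, u⟫)
    (h2 : ⟪matCLM W v, v⟫ ≤ lamd + (1 / 4) * (lam1 - lamd))
    (l1 ld lhat : ℝ)
    (hl1 : l1 = ⟪matCLM W u, u⟫) (hld : ld = ⟪matCLM W v, v⟫)
    (hlhat : lhat = max l1 (-ld)) :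
    lam1 ≤ l1 + (1 / 2) * (l1 - ld)
      ∧ ld - (1 / 2) * (l1 - ld) ≤ lamd
      ∧ ‖matCLM W‖ ≤ 2 * lhat :=
  stmt16_general W hW lam1 lamd hlam1ub hlamdlb u v hu h1 h2 l1 ld lhat hl1 hld hlhat

end
end

section
/- Let B be a real symmetric d×d matrix with 0 ≤ ⟨Bv, v⟩ ≤ L₁‖v‖² for all v ∈ ℝ^d (for some L₁ > 0), let α ∈ (0,1], and let η be a scalar with 0 < η ≤ α/(2L₁). Set A = I + ηB, let b ∈ ℝ^d with b ≠ 0, and define s₁ = (⟨b, Ab⟩/‖Ab‖²)·b. Then ‖s₁‖ ≥ ‖b‖/(1 + ηL₁), ‖As₁ − b‖ ≤ ηL₁‖b‖, and consequently ‖As₁ − b‖ ≤ α‖s₁‖. -/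
/-!
Let `T` be the operator of `B` and `A = 1 + η T`. Both `T` and `A` are positive, with
`⟪T v, v⟫ ≤ L₁ ‖v‖²` and `⟪A v, v⟫ ≤ (1 + η L₁) ‖v‖²`. Cauchy–Schwarz for the semidefinite form
`⟪T ·, ·⟫` upgrades such a bound to `‖T v‖² ≤ L ⟪T v, v⟫`. For `A` this says that the step length
`⟪b, A b⟫ / ‖A b‖²` is at least `1 / (1 + η L₁)`, which gives the lower bound on `‖s₁‖`.
Since `A s₁` is the orthogonal projection of `b` onto `ℝ ∙ A b`, the step length minimizes
`t ↦ ‖t A b - b‖`; taking `t = 1` bounds the residual by `‖A b - b‖ = η ‖T b‖ ≤ η L₁ ‖b‖`.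
The stopping test then reduces to `η L₁ (1 + η L₁) ≤ α`, which holds because `η L₁ ≤ α / 2 ≤ 1 / 2`.
-/

open scoped RealInnerProductSpace

noncomputable section

section

variable {E : Type*} [NormedAddCommGroup E] [InnerProductSpace ℝ E]

theorem ContinuousLinearMap.IsPositive.norm_apply_sq_le {T : E →L[ℝ] E} (hT : T.IsPositive)
    {L : ℝ} (hL : ∀ v, ⟪T v, v⟫ ≤ L * ‖v‖ ^ 2) (v : E) : ‖T v‖ ^ 2 ≤ L * ⟪T v, v⟫ := by
  have cs := LinearMap.BilinForm.apply_mul_apply_le_of_forall_zero_le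
    ((innerₗ E).comp (T : E →ₗ[ℝ] E)) hT.inner_nonneg_left v (T v)
  simp only [LinearMap.comp_apply, innerₗ_apply_apply, ContinuousLinearMap.coe_coe,
    real_inner_self_eq_norm_sq, hT.inner_left_eq_inner_right (T v) v] at cs
  rcases (norm_nonneg (T v)).eq_or_lt with h0 | hpos
  · simp [norm_eq_zero.mp h0.symm]
  · have hr := mul_le_mul_of_nonneg_left (hL (T v)) (hT.inner_nonneg_left v)
    refine le_of_mul_le_mul_right (cs.trans (le_of_le_of_eq hr ?_)) (pow_pos hpos 2)
    ring

theorem ContinuousLinearMap.IsPositive.norm_apply_le {T : E →L[ℝ] E} (hT : T.IsPositive)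
    {L : ℝ} (hL0 : 0 ≤ L) (hL : ∀ v, ⟪T v, v⟫ ≤ L * ‖v‖ ^ 2) (v : E) : ‖T v‖ ≤ L * ‖v‖ := by
  have h := hT.norm_apply_sq_le hL v
  have hcs : L * ⟪T v, v⟫ ≤ L * ‖v‖ * ‖T v‖ := by
    rw [mul_assoc, mul_comm ‖v‖]
    exact mul_le_mul_of_nonneg_left (real_inner_le_norm (T v) v) hL0
  rcases (norm_nonneg (T v)).eq_or_lt with h0 | hpos
  · rw [← h0]; positivity
  · exact le_of_mul_le_mul_right (by nlinarith) hpos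

theorem norm_inner_div_smul_sub_le (u b : E) (t : ℝ) :
    ‖(⟪b, u⟫ / ‖u‖ ^ 2) • u - b‖ ≤ ‖t • u - b‖ := by
  rw [norm_sub_rev, norm_sub_rev (t • u), real_inner_comm]
  have h := (ℝ ∙ u).starProjection_minimal b
  rw [Submodule.starProjection_singleton, RCLike.ofReal_real_eq_id, id] at h
  rw [h]
  exact ciInf_le ⟨0, Set.forall_mem_range.mpr fun _ => norm_nonneg _⟩
    (⟨t • u, Submodule.smul_mem _ _ (Submodule.mem_span_singleton_self u)⟩ : ℝ ∙ u)

theorem div_le_norm_inner_div_smul {u b : E} {K : ℝ} (hpos : 0 < ⟪b, u⟫)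
    (hK : ‖u‖ ^ 2 ≤ K * ⟪b, u⟫) : ‖b‖ / K ≤ ‖(⟪b, u⟫ / ‖u‖ ^ 2) • b‖ := by
  have hu : 0 < ‖u‖ ^ 2 := by
    have : u ≠ 0 := by rintro rfl; simp at hpos
    positivity
  have hK0 : 0 < K := pos_of_mul_pos_left (hu.trans_le hK) hpos.le
  rw [norm_smul, Real.norm_of_nonneg (by positivity), div_eq_inv_mul]
  refine mul_le_mul_of_nonneg_right ?_ (norm_nonneg b)
  rw [inv_eq_one_div, div_le_div_iff₀ hK0 hu]
  linarith

end

theorem isSymmetric_matCLM_s18 {d : ℕ} {M : Matrix (Fin d) (Fin d) ℝ} (hM : M.IsSymm) :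
    (matCLM M).IsSymmetric :=
  Matrix.isSymmetric_toEuclideanLin_iff.mpr (Matrix.isHermitian_iff_isSymm.mpr hM)

theorem matCLM_one_add_smul {d : ℕ} (M : Matrix (Fin d) (Fin d) ℝ) (η : ℝ) :
    matCLM (1 + η • M) = 1 + η • matCLM M := by
  simp [matCLM]

/-- When the step size satisfies `η ≤ α/(2L₁)`, the first conjugate
residual iterate `s₁` for the system `(I + ηB)s = b` already satisfies the relative
residual stopping test `‖As₁ − b‖ ≤ α‖s₁‖`. -/
theorem stmt18 {d : ℕ}
    (L₁ : ℝ) (hL₁ : 0 < L₁)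
    (B : Matrix (Fin d) (Fin d) ℝ) (hBsymm : B.IsSymm)
    (hB : ∀ v : EuclideanSpace ℝ (Fin d),
      0 ≤ ⟪matCLM B v, v⟫ ∧ ⟪matCLM B v, v⟫ ≤ L₁ * ‖v‖ ^ 2)
    (α : ℝ) (hα0 : 0 < α) (hα1 : α ≤ 1)
    (η : ℝ) (hη0 : 0 < η) (hη1 : η ≤ α / (2 * L₁))
    (A : Matrix (Fin d) (Fin d) ℝ) (hA : A = 1 + η • B)
    (b : EuclideanSpace ℝ (Fin d)) (hb : b ≠ 0)
    (s₁ : EuclideanSpace ℝ (Fin d))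
    (hs₁ : s₁ = (⟪b, matCLM A b⟫ / ‖matCLM A b‖ ^ 2) • b) :
    ‖b‖ / (1 + η * L₁) ≤ ‖s₁‖
      ∧ ‖matCLM A s₁ - b‖ ≤ η * L₁ * ‖b‖
      ∧ ‖matCLM A s₁ - b‖ ≤ α * ‖s₁‖ := by
  set T := matCLM B
  have hT : T.IsPositive := ⟨isSymmetric_matCLM_s18 hBsymm, fun v => (hB v).1⟩
  have hAT : matCLM A = 1 + η • T := by rw [hA, matCLM_one_add_smul]
  have hquad (v) : ⟪matCLM A v, v⟫ = ‖v‖ ^ 2 + η * ⟪T v, v⟫ := by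
    simp [hAT, inner_add_left, real_inner_smul_left]
  have hApos : (matCLM A).IsPositive :=
    hAT ▸ ContinuousLinearMap.isPositive_one.add (hT.smul_of_nonneg hη0.le)
  have hAle (v) : ⟪matCLM A v, v⟫ ≤ (1 + η * L₁) * ‖v‖ ^ 2 := by
    rw [hquad]; nlinarith [(hB v).2]
  have hinner_pos : 0 < ⟪b, matCLM A b⟫ := by
    rw [real_inner_comm, hquad]
    have := (hB b).1
    positivity
  have hs₁_norm : ‖b‖ / (1 + η * L₁) ≤ ‖s₁‖ := hs₁ ▸ div_le_norm_inner_div_smul hinner_pos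
    (by rw [real_inner_comm]; exact hApos.norm_apply_sq_le hAle b)
  have hres : ‖matCLM A s₁ - b‖ ≤ η * L₁ * ‖b‖ := calc
    ‖matCLM A s₁ - b‖ ≤ ‖(1 : ℝ) • matCLM A b - b‖ := by
      rw [hs₁, map_smul]; exact norm_inner_div_smul_sub_le _ _ 1
    _ = η * ‖T b‖ := by simp [hAT, norm_smul, hη0.le]
    _ ≤ η * (L₁ * ‖b‖) :=
      mul_le_mul_of_nonneg_left (hT.norm_apply_le hL₁.le (fun v => (hB v).2) b) hη0.le
    _ = η * L₁ * ‖b‖ := by ring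
  have hηL : η * L₁ * (1 + η * L₁) ≤ α := by
    have := (le_div_iff₀ (by positivity)).mp hη1
    nlinarith [mul_pos hη0 hL₁]
  refine ⟨hs₁_norm, hres, hres.trans ?_⟩
  calc η * L₁ * ‖b‖ ≤ α * (‖b‖ / (1 + η * L₁)) := by
        rw [mul_div_assoc', le_div_iff₀ (by positivity)]
        nlinarith [mul_le_mul_of_nonneg_right hηL (norm_nonneg b)]
    _ ≤ α * ‖s₁‖ := mul_le_mul_of_nonneg_left hs₁_norm hα0.le

end
end

section
/- Let β ∈ (0,1), σ₀ > 0, and let (η_k)_{k≥0} and (η̂_k)_{k≥0} be sequences of positive reals with η₀ = σ₀, 0 < η̂_k ≤ η_k for all k, and η_{k+1} ≤ η̂_k/β for all k. Then for every N ≥ 1: Σ_{k=0}^{N−1} ( log(η_k/η̂_k)/log(1/β) + 1 ) ≤ 2N − 1 + log(σ₀/η̂_{N−1})/log(1/β). -/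
/-- Bound on the total number of backtracking line-search steps over the
first `N` iterations: the number of steps at iteration `k` is `log_{1/β}(η_k/η̂_k) + 1`. -/
theorem stmt19
    (β σ₀ : ℝ) (hβ0 : 0 < β) (hβ1 : β < 1) (hσ₀ : 0 < σ₀)
    (η ηh : ℕ → ℝ) (hη0 : η 0 = σ₀)
    (hηpos : ∀ k, 0 < η k) (hηhpos : ∀ k, 0 < ηh k)
    (hle : ∀ k, ηh k ≤ η k)
    (hnext : ∀ k, η (k + 1) ≤ ηh k / β)
    (N : ℕ) (hN : 1 ≤ N) :
    ∑ k ∈ Finset.range N, (Real.log (η k / ηh k) / Real.log (1 / β) + 1)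
      ≤ 2 * (N : ℝ) - 1 + Real.log (σ₀ / ηh (N - 1)) / Real.log (1 / β) := by
  have hL : 0 < Real.log (1 / β) := by
    apply Real.log_pos
    rw [lt_div_iff₀ hβ0]; linarith
  induction N, hN using Nat.le_induction with
  | base =>
    simp only [Finset.range_one, Finset.sum_singleton, hη0, Nat.cast_one]
    linarith
  | succ n hn ih =>
    rw [Finset.sum_range_succ]
    set L := Real.log (1 / β)
    have key : Real.log (η n) ≤ Real.log (ηh (n - 1)) + L := by
      obtain ⟨m, rfl⟩ := Nat.exists_eq_add_of_le hn
      have h1 : η (m + 1) ≤ ηh m / β := hnext m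
      have h2 : Real.log (η (m + 1)) ≤ Real.log (ηh m / β) :=
        Real.log_le_log (hηpos _) h1
      rw [Real.log_div (hηhpos m).ne' hβ0.ne'] at h2
      have : L = -Real.log β := by simp [L, Real.log_div one_ne_zero hβ0.ne']
      simpa [this, add_comm 1 m, sub_eq_add_neg] using h2
    have e1 := Real.log_div (hηpos n).ne' (hηhpos n).ne'
    have e2 := Real.log_div hσ₀.ne' (hηhpos n).ne'
    have e3 := Real.log_div hσ₀.ne' (hηhpos (n - 1)).ne'
    have hnum : Real.log (η n / ηh n)
        ≤ L + (Real.log (σ₀ / ηh n) - Real.log (σ₀ / ηh (n - 1))) := by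
      rw [e1, e2, e3]; linarith
    have hstep : Real.log (η n / ηh n) / L + 1
        ≤ 2 + (Real.log (σ₀ / ηh n) - Real.log (σ₀ / ηh (n - 1))) / L := by
      have h3 : Real.log (η n / ηh n) / L
          ≤ (L + (Real.log (σ₀ / ηh n) - Real.log (σ₀ / ηh (n - 1)))) / L := by
        gcongr
      rw [add_div, div_self hL.ne'] at h3
      linarith
    have hd : (Real.log (σ₀ / ηh n) - Real.log (σ₀ / ηh (n - 1))) / L
        = Real.log (σ₀ / ηh n) / L - Real.log (σ₀ / ηh (n - 1)) / L := sub_div _ _ _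
    rw [hd] at hstep
    simp only [Nat.add_sub_cancel]
    push_cast
    linarith
end
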